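/- arXiv:2501.16089 — 17 statements merged into one kernel-verified Lean document; each statement's English description precedes it below -/
import Mathlib

section
/- Let (G,K,H,E) be a trifactorised group, and for g ∈ G write g = k_g·e_g for its unique factorisation with k_g ∈ K and e_g ∈ E. Then the map σ: H → K given by σ(h) = k_h is a bijection, and for all h₁, h₂ ∈ H one has σ(h₁h₂) = σ(h₁)·(e_{h₁}·σ(h₂)·e_{h₁}⁻¹); that is, σ is a bijective derivation with respect to the action of H on K given by h·k = e_h k e_h⁻¹. -/
/-- A trifactorised group: `K` is a normal subgroup, `H`, `E` are subgroups,
`G = KH = KE = HE` and `K ∩ E = H ∩ E = 1`. -/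
structure IsTrifactorised {G : Type*} [Group G] (K H E : Subgroup G) : Prop where
  normal : K.Normal
  factKH : ∀ g : G, ∃ k ∈ K, ∃ h ∈ H, g = k * h
  factKE : ∀ g : G, ∃ k ∈ K, ∃ e ∈ E, g = k * e
  factHE : ∀ g : G, ∃ h ∈ H, ∃ e ∈ E, g = h * e
  trivKE : K ⊓ E = ⊥
  trivHE : H ⊓ E = ⊥

/-- the map `σ : H → K`, `σ(h) = k_h`, is a bijection and a derivation
with respect to the action `h · k = e_h k e_h⁻¹` of `H` on `K`. -/
theorem stmt0 {G : Type*} [Group G] (K H E : Subgroup G)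
    (hT : IsTrifactorised K H E)
    (kc ec : G → G)
    (hkc : ∀ g : G, kc g ∈ K) (hec : ∀ g : G, ec g ∈ E)
    (hfac : ∀ g : G, g = kc g * ec g) :
    Set.BijOn kc (H : Set G) (K : Set G) ∧
      (∀ h ∈ H, ∀ k ∈ K, ec h * k * (ec h)⁻¹ ∈ K) ∧
      (∀ h₁ ∈ H, ∀ h₂ ∈ H,
        kc (h₁ * h₂) = kc h₁ * (ec h₁ * kc h₂ * (ec h₁)⁻¹)) := by
  -- uniqueness of KE decomposition
  have uniq : ∀ {k e k' e' : G}, k ∈ K → e ∈ E → k' ∈ K → e' ∈ E →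
      k * e = k' * e' → k = k' ∧ e = e' := by
    intro k e k' e' hk he hk' he' heq
    have h1 : k'⁻¹ * k = e' * e⁻¹ := by
      have h2 : k'⁻¹ * (k * e) = e' := by rw [heq]; group
      rw [← h2]; group
    have hmem : k'⁻¹ * k ∈ K ⊓ E := by
      constructor
      · exact K.mul_mem (K.inv_mem hk') hk
      · rw [h1]; exact E.mul_mem he' (E.inv_mem he)
    rw [hT.trivKE, Subgroup.mem_bot] at hmem
    refine ⟨(inv_mul_eq_one.mp hmem).symm, ?_⟩
    have h3 : e' * e⁻¹ = 1 := by rw [← h1, hmem]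
    exact (mul_inv_eq_one.mp h3).symm
  -- kc determined
  have kc_eq : ∀ {g k e : G}, k ∈ K → e ∈ E → g = k * e → kc g = k ∧ ec g = e := by
    intro g k e hk he hg
    exact uniq (hkc g) (hec g) hk he (by rw [← hfac g, hg])
  refine ⟨⟨fun h hh => hkc h, ?_, ?_⟩, ?_, ?_⟩
  · -- injective on H
    intro h₁ hh₁ h₂ hh₂ heq
    have h1 := hfac h₁
    have h2 := hfac h₂
    rw [← heq] at h2
    have hmem : h₂⁻¹ * h₁ ∈ H ⊓ E := by
      constructor
      · exact H.mul_mem (H.inv_mem hh₂) hh₁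
      · have hkey : h₂⁻¹ * h₁ = (ec h₂)⁻¹ * ec h₁ := by
          calc h₂⁻¹ * h₁ = (kc h₁ * ec h₂)⁻¹ * (kc h₁ * ec h₁) := by rw [← h2, ← h1]
            _ = (ec h₂)⁻¹ * ec h₁ := by group
        rw [hkey]
        exact E.mul_mem (E.inv_mem (hec h₂)) (hec h₁)
    rw [hT.trivHE, Subgroup.mem_bot] at hmem
    exact (inv_mul_eq_one.mp hmem).symm
  · -- surjective onto K
    intro k hk
    obtain ⟨h, hh, e, he, hk_eq⟩ := hT.factHE k
    refine ⟨h, hh, ?_⟩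
    have : h = k * e⁻¹ := by rw [hk_eq]; group
    exact (kc_eq hk (E.inv_mem he) this).1
  · intro h hh k hk
    exact (hT.normal.conj_mem k hk (ec h))
  · intro h₁ hh₁ h₂ hh₂
    have key : h₁ * h₂ = (kc h₁ * (ec h₁ * kc h₂ * (ec h₁)⁻¹)) * (ec h₁ * ec h₂) := by
      conv_lhs => rw [hfac h₁, hfac h₂]
      group
    exact (kc_eq (K.mul_mem (hkc h₁) (hT.normal.conj_mem _ (hkc h₂) (ec h₁)))
      (E.mul_mem (hec h₁) (hec h₂)) key).1
end

section
/- Let (G,K,H,E) be a trifactorised group with associated bijective derivation σ: H → K, and for k ∈ K let e_k ∈ E denote the E-component of σ⁻¹(k) (so σ⁻¹(k) = k·e_k). Define the operation ⊡ on K by k₁ ⊡ k₂ = k₁·(e_{k₁}·k₂·e_{k₁}⁻¹). Then (K, ⊡) is a group, the map σ⁻¹: (K,⊡) → H is a group isomorphism, and the skew left brace compatibility law a ⊡ (b·c) = (a ⊡ b)·a⁻¹·(a ⊡ c) holds for all a,b,c ∈ K, where · denotes the original group operation of K. Thus (K, ·, ⊡) is a skew left brace with additive group (K,·) and multiplicative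 group (K,⊡). -/
/-- The brace multiplication `k₁ ⊡ k₂ = k₁ · (e_{k₁} k₂ e_{k₁}⁻¹)`, where
`eK k` is the `E`-component of `σ⁻¹(k)`. -/
def bop {G : Type*} [Group G] (eK : G → G) (a b : G) : G :=
  a * (eK a * b * (eK a)⁻¹)

/-- `(K, ⊡)` is a group, `σ⁻¹ : (K,⊡) → H`, `k ↦ k · e_k`, is a group
isomorphism, and the skew left brace compatibility law holds, so `(K, ·, ⊡)` is a
skew left brace. -/
theorem stmt1 {G : Type*} [Group G] (K H E : Subgroup G)
    (hT : IsTrifactorised K H E)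
    (eK : G → G)
    (heKE : ∀ k ∈ K, eK k ∈ E)
    (heKH : ∀ k ∈ K, k * eK k ∈ H) :
    -- (K, ⊡) is a group:
    (∀ a ∈ K, ∀ b ∈ K, bop eK a b ∈ K) ∧
    (∀ a ∈ K, bop eK 1 a = a ∧ bop eK a 1 = a) ∧
    (∀ a ∈ K, ∀ b ∈ K, ∀ c ∈ K,
      bop eK (bop eK a b) c = bop eK a (bop eK b c)) ∧
    (∀ a ∈ K, ∃ b ∈ K, bop eK a b = 1 ∧ bop eK b a = 1) ∧
    -- σ⁻¹ : (K,⊡) → H is a group isomorphism: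
    (∀ a ∈ K, ∀ b ∈ K,
      bop eK a b * eK (bop eK a b) = (a * eK a) * (b * eK b)) ∧
    -- the skew left brace compatibility law:
    (∀ a ∈ K, ∀ b ∈ K, ∀ c ∈ K,
      bop eK a (b * c) = bop eK a b * a⁻¹ * bop eK a c) := by
  -- uniqueness of the E-component
  have uniq : ∀ k ∈ K, ∀ e ∈ E, k * e ∈ H → e = eK k := by
    intro k hk e he hke
    have h1 : k * eK k ∈ H := heKH k hk
    have h2 : e⁻¹ * eK k ∈ H := by
      have := H.mul_mem (H.inv_mem hke) h1
      simpa [mul_assoc] using this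
    have h3 : e⁻¹ * eK k ∈ E := E.mul_mem (E.inv_mem he) (heKE k hk)
    have h4 : e⁻¹ * eK k ∈ H ⊓ E := ⟨h2, h3⟩
    rw [hT.trivHE, Subgroup.mem_bot] at h4
    have : e * (e⁻¹ * eK k) = e * 1 := by rw [h4]
    simpa [mul_assoc] using this.symm
  have mem : ∀ a ∈ K, ∀ b ∈ K, bop eK a b ∈ K := by
    intro a ha b hb
    exact K.mul_mem ha (hT.normal.conj_mem b hb (eK a))
  have hom : ∀ a ∈ K, ∀ b ∈ K,
      bop eK a b * eK (bop eK a b) = (a * eK a) * (b * eK b) ∧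
      eK (bop eK a b) = eK a * eK b := by
    intro a ha b hb
    have hE : eK a * eK b ∈ E := E.mul_mem (heKE a ha) (heKE b hb)
    have hprod : bop eK a b * (eK a * eK b) = (a * eK a) * (b * eK b) := by
      unfold bop; group
    have hHmem : bop eK a b * (eK a * eK b) ∈ H := by
      rw [hprod]; exact H.mul_mem (heKH a ha) (heKH b hb)
    have he : eK a * eK b = eK (bop eK a b) :=
      uniq _ (mem a ha b hb) _ hE hHmem
    exact ⟨by rw [← he]; exact hprod, he.symm⟩
  have e1 : eK 1 = 1 := by
    have h4 : eK 1 ∈ H ⊓ E := ⟨by simpa using heKH 1 K.one_mem, heKE 1 K.one_mem⟩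
    rw [hT.trivHE, Subgroup.mem_bot] at h4
    exact h4
  refine ⟨mem, ?_, ?_, ?_, fun a ha b hb => (hom a ha b hb).1, ?_⟩
  · intro a ha
    constructor <;> simp [bop, e1]
  · intro a ha b hb c hc
    have h1 := (hom a ha b hb).2
    have h2 := (hom b hb c hc).2
    simp only [bop] at h1 h2 ⊢
    rw [h1]
    group
  · intro a ha
    refine ⟨(eK a)⁻¹ * a⁻¹ * eK a, ?_, ?_, ?_⟩
    · have := hT.normal.conj_mem a⁻¹ (K.inv_mem ha) (eK a)⁻¹
      simpa [mul_assoc] using this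
    · unfold bop; group
    · have hb : (eK a)⁻¹ * a⁻¹ * eK a ∈ K := by
        have := hT.normal.conj_mem a⁻¹ (K.inv_mem ha) (eK a)⁻¹
        simpa [mul_assoc] using this
      have heb : eK ((eK a)⁻¹ * a⁻¹ * eK a) = (eK a)⁻¹ := by
        refine (uniq _ hb _ (E.inv_mem (heKE a ha)) ?_).symm
        have : (eK a)⁻¹ * a⁻¹ * eK a * (eK a)⁻¹ = (a * eK a)⁻¹ := by group
        rw [this]
        exact H.inv_mem (heKH a ha)
      unfold bop
      rw [heb]
      group
  · intro a ha b hb c hc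
    unfold bop; group
end

section
/- Let f: (G₁,K₁,H₁,E₁) → (G₂,K₂,H₂,E₂) be a morphism of trifactorised groups, and for i = 1,2 let ⊡ᵢ be the induced brace multiplication on Kᵢ, defined by k ⊡ᵢ k' = k·(e_k·k'·e_k⁻¹), where e_k ∈ Eᵢ is the Eᵢ-component of σᵢ⁻¹(k) and σᵢ: Hᵢ → Kᵢ is the associated bijective derivation. Then the restriction f|_{K₁}: K₁ → K₂ satisfies f(k ⊡₁ k') = f(k) ⊡₂ f(k') for all k, k' ∈ K₁; that is, f|_{K₁} is a homomorphism of the associated skew left braces (preserving both group operations on K₁). -/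
/-- a morphism of trifactorised groups restricts on `K₁` to a
homomorphism of the associated skew left braces: it also preserves `⊡`. -/
theorem stmt2 {G₁ G₂ : Type*} [Group G₁] [Group G₂]
    (K₁ H₁ E₁ : Subgroup G₁) (K₂ H₂ E₂ : Subgroup G₂)
    (hT₁ : IsTrifactorised K₁ H₁ E₁) (hT₂ : IsTrifactorised K₂ H₂ E₂)
    (f : G₁ →* G₂)
    (hK : ∀ x ∈ K₁, f x ∈ K₂) (hH : ∀ x ∈ H₁, f x ∈ H₂) (hE : ∀ x ∈ E₁, f x ∈ E₂)
    (eK₁ : G₁ → G₁) (eK₂ : G₂ → G₂)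
    (heKE₁ : ∀ k ∈ K₁, eK₁ k ∈ E₁) (heKH₁ : ∀ k ∈ K₁, k * eK₁ k ∈ H₁)
    (heKE₂ : ∀ k ∈ K₂, eK₂ k ∈ E₂) (heKH₂ : ∀ k ∈ K₂, k * eK₂ k ∈ H₂) :
    ∀ k ∈ K₁, ∀ k' ∈ K₁, f (bop eK₁ k k') = bop eK₂ (f k) (f k') := by
  intro k hk k' hk'
  have key : f (eK₁ k) = eK₂ (f k) := by
    have h1 : f k * f (eK₁ k) ∈ H₂ := by
      rw [← f.map_mul]; exact hH _ (heKH₁ k hk)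
    have h2 : f k * eK₂ (f k) ∈ H₂ := heKH₂ _ (hK k hk)
    have hEq : (f k * f (eK₁ k))⁻¹ * (f k * eK₂ (f k)) = 1 := by
      have hmem : (f k * f (eK₁ k))⁻¹ * (f k * eK₂ (f k)) ∈ H₂ ⊓ E₂ := by
        constructor
        · exact H₂.mul_mem (H₂.inv_mem h1) h2
        · have : (f k * f (eK₁ k))⁻¹ * (f k * eK₂ (f k))
              = (f (eK₁ k))⁻¹ * eK₂ (f k) := by group
          rw [this]
          exact E₂.mul_mem (E₂.inv_mem (hE _ (heKE₁ k hk))) (heKE₂ _ (hK k hk))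
      rw [hT₂.trivHE] at hmem
      exact hmem
    have : (f (eK₁ k))⁻¹ * eK₂ (f k) = 1 := by
      have h := hEq
      rwa [show (f k * f (eK₁ k))⁻¹ * (f k * eK₂ (f k))
          = (f (eK₁ k))⁻¹ * eK₂ (f k) by group] at h
    exact (inv_mul_eq_one.mp this)
  simp only [bop, f.map_mul, f.map_inv, key]
end

section
/- Let f: (G₁,K₁,H₁,E₁) → (G₂,K₂,H₂,E₂) be a morphism of trifactorised groups. If f: G₁ → G₂ is surjective, then f(K₁) = K₂, f(H₁) = H₂ and f(E₁) = E₂, i.e., the restrictions of f to K₁, H₁ and E₁ are surjective onto K₂, H₂ and E₂ respectively. -/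
/-- if a morphism of trifactorised groups is surjective, then its
restrictions to `K₁`, `H₁` and `E₁` are surjective onto `K₂`, `H₂`, `E₂`. -/
theorem stmt4 {G₁ G₂ : Type*} [Group G₁] [Group G₂]
    (K₁ H₁ E₁ : Subgroup G₁) (K₂ H₂ E₂ : Subgroup G₂)
    (hT₁ : IsTrifactorised K₁ H₁ E₁) (hT₂ : IsTrifactorised K₂ H₂ E₂)
    (f : G₁ →* G₂)
    (hK : ∀ x ∈ K₁, f x ∈ K₂) (hH : ∀ x ∈ H₁, f x ∈ H₂) (hE : ∀ x ∈ E₁, f x ∈ E₂)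
    (hsurj : Function.Surjective f) :
    Subgroup.map f K₁ = K₂ ∧ Subgroup.map f H₁ = H₂ ∧ Subgroup.map f E₁ = E₂ := by
  have le_bot := fun (S : Subgroup G₂) (h : S = (⊥ : Subgroup G₂)) => h.le
  refine ⟨le_antisymm ?_ ?_, le_antisymm ?_ ?_, le_antisymm ?_ ?_⟩
  · rintro y ⟨x, hx, rfl⟩; exact hK x hx
  · intro y hy
    obtain ⟨g, rfl⟩ := hsurj y
    obtain ⟨k, hk, e, he, rfl⟩ := hT₁.factKE g
    have h1 : f e ∈ K₂ ⊓ E₂ := ⟨(inv_mul_cancel_left (f k) (f e)) ▸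
      (K₂.mul_mem (K₂.inv_mem (hK k hk)) (by rw [← f.map_mul]; exact hy)), hE e he⟩
    have h2 : f e = 1 := by simpa using hT₂.trivKE.le h1
    exact ⟨k, hk, by simp [f.map_mul, h2]⟩
  · rintro y ⟨x, hx, rfl⟩; exact hH x hx
  · intro y hy
    obtain ⟨g, rfl⟩ := hsurj y
    obtain ⟨h, hh, e, he, rfl⟩ := hT₁.factHE g
    have h1 : f e ∈ H₂ ⊓ E₂ := ⟨(inv_mul_cancel_left (f h) (f e)) ▸
      (H₂.mul_mem (H₂.inv_mem (hH h hh)) (by rw [← f.map_mul]; exact hy)), hE e he⟩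
    have h2 : f e = 1 := by simpa using hT₂.trivHE.le h1
    exact ⟨h, hh, by simp [f.map_mul, h2]⟩
  · rintro y ⟨x, hx, rfl⟩; exact hE x hx
  · intro y hy
    obtain ⟨g, rfl⟩ := hsurj y
    obtain ⟨k, hk, e, he, rfl⟩ := hT₁.factKE g
    have h1 : f k ∈ K₂ ⊓ E₂ := ⟨hK k hk, (mul_inv_cancel_right (f k) (f e)) ▸
      (E₂.mul_mem (by rw [← f.map_mul]; exact hy) (E₂.inv_mem (hE e he)))⟩
    have h2 : f k = 1 := by simpa using hT₂.trivKE.le h1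
    exact ⟨e, he, by simp [f.map_mul, h2]⟩
end

section
/- Let f: (G₁,K₁,H₁,E₁) → (G₂,K₂,H₂,E₂) be a morphism of trifactorised groups. Then the restriction of f to K₁ is injective if and only if the restriction of f to H₁ is injective, and f(K₁) = K₂ if and only if f(H₁) = H₂. In particular, f restricted to K₁ is a bijection onto K₂ if and only if f restricted to H₁ is a bijection onto H₂. -/
private lemma triv_eq {G : Type*} [Group G] {A E : Subgroup G} (h : A ⊓ E = ⊥)
    {x : G} (hx : x ∈ A) (hx' : x ∈ E) : x = 1 := by
  have : x ∈ A ⊓ E := ⟨hx, hx'⟩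
  rw [h, Subgroup.mem_bot] at this
  exact this

/-- Injectivity transfer lemma. -/
private lemma inj_aux {G₁ G₂ : Type*} [Group G₁] [Group G₂]
    (A₁ B₁ E₁ : Subgroup G₁) (A₂ E₂ : Subgroup G₂) (f : G₁ →* G₂)
    (hA : ∀ x ∈ A₁, f x ∈ A₂) (hE : ∀ x ∈ E₁, f x ∈ E₂)
    (fact : ∀ g : G₁, ∃ a ∈ A₁, ∃ e ∈ E₁, g = a * e)
    (t2 : A₂ ⊓ E₂ = ⊥) (t1 : B₁ ⊓ E₁ = ⊥)
    (hinj : Set.InjOn f (A₁ : Set G₁)) : Set.InjOn f (B₁ : Set G₁) := by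
  intro x hx y hy hxy
  obtain ⟨a, ha, e, he, hxe⟩ := fact x
  obtain ⟨a', ha', e', he', hye⟩ := fact y
  have h1 : f x = f a * f e := by rw [hxe, map_mul]
  have h2 : f y = f a' * f e' := by rw [hye, map_mul]
  rw [h1, h2] at hxy
  have hfa : f a = f a' := by
    have hmem : (f a')⁻¹ * f a = 1 := by
      apply triv_eq t2 (A₂.mul_mem (A₂.inv_mem (hA a' ha')) (hA a ha))
      have heq : (f a')⁻¹ * f a = f e' * (f e)⁻¹ := by
        have haux : (f a')⁻¹ * (f a * f e) * (f e)⁻¹ = f e' * (f e)⁻¹ := by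
          rw [hxy]; group
        calc (f a')⁻¹ * f a = (f a')⁻¹ * (f a * f e) * (f e)⁻¹ := by group
          _ = f e' * (f e)⁻¹ := haux
      rw [heq]
      exact E₂.mul_mem (hE e' he') (E₂.inv_mem (hE e he))
    exact (inv_mul_eq_one.mp hmem).symm
  have haa : a = a' := hinj ha ha' hfa
  have : y⁻¹ * x = 1 := by
    apply triv_eq t1 (B₁.mul_mem (B₁.inv_mem hy) hx)
    have : y⁻¹ * x = e'⁻¹ * e := by
      rw [hxe, hye, haa]
      group
    rw [this]
    exact E₁.mul_mem (E₁.inv_mem he') he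
  exact (inv_mul_eq_one.mp this).symm

/-- Image transfer lemma. -/
private lemma surj_aux {G₁ G₂ : Type*} [Group G₁] [Group G₂]
    (A₁ B₁ E₁ : Subgroup G₁) (A₂ B₂ E₂ : Subgroup G₂) (f : G₁ →* G₂)
    (hB : ∀ x ∈ B₁, f x ∈ B₂) (hE : ∀ x ∈ E₁, f x ∈ E₂)
    (fact1 : ∀ g : G₁, ∃ b ∈ B₁, ∃ e ∈ E₁, g = b * e)
    (fact2 : ∀ g : G₂, ∃ a ∈ A₂, ∃ e ∈ E₂, g = a * e)
    (t2 : B₂ ⊓ E₂ = ⊥)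
    (hmap : Subgroup.map f A₁ = A₂) : Subgroup.map f B₁ = B₂ := by
  apply le_antisymm
  · rintro _ ⟨b, hb, rfl⟩
    exact hB b hb
  · intro b₂ hb₂
    obtain ⟨a₂, ha₂, e₂, he₂, hfac⟩ := fact2 b₂
    rw [← hmap] at ha₂
    obtain ⟨a₁, ha₁, rfl⟩ := ha₂
    obtain ⟨b₁, hb₁, e₁, he₁, hfac1⟩ := fact1 a₁
    have key : (f b₁)⁻¹ * b₂ = 1 := by
      apply triv_eq t2 (B₂.mul_mem (B₂.inv_mem (hB b₁ hb₁)) hb₂)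
      have : (f b₁)⁻¹ * b₂ = f e₁ * e₂ := by
        rw [hfac, hfac1, map_mul]
        group
      rw [this]
      exact E₂.mul_mem (hE e₁ he₁) he₂
    exact ⟨b₁, hb₁, inv_mul_eq_one.mp key⟩

/-- for a morphism of trifactorised groups, `f|_{K₁}` is injective iff
`f|_{H₁}` is injective, `f(K₁) = K₂` iff `f(H₁) = H₂`, and `f|_{K₁}` is a bijection
onto `K₂` iff `f|_{H₁}` is a bijection onto `H₂`. -/
theorem stmt5 {G₁ G₂ : Type*} [Group G₁] [Group G₂]
    (K₁ H₁ E₁ : Subgroup G₁) (K₂ H₂ E₂ : Subgroup G₂)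
    (hT₁ : IsTrifactorised K₁ H₁ E₁) (hT₂ : IsTrifactorised K₂ H₂ E₂)
    (f : G₁ →* G₂)
    (hK : ∀ x ∈ K₁, f x ∈ K₂) (hH : ∀ x ∈ H₁, f x ∈ H₂) (hE : ∀ x ∈ E₁, f x ∈ E₂) :
    (Set.InjOn f (K₁ : Set G₁) ↔ Set.InjOn f (H₁ : Set G₁)) ∧
    (Subgroup.map f K₁ = K₂ ↔ Subgroup.map f H₁ = H₂) ∧
    (Set.BijOn f (K₁ : Set G₁) (K₂ : Set G₂) ↔
      Set.BijOn f (H₁ : Set G₁) (H₂ : Set G₂)) := by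
  have inj_iff : Set.InjOn f (K₁ : Set G₁) ↔ Set.InjOn f (H₁ : Set G₁) :=
    ⟨fun h => inj_aux K₁ H₁ E₁ K₂ E₂ f hK hE hT₁.factKE hT₂.trivKE hT₁.trivHE h,
     fun h => inj_aux H₁ K₁ E₁ H₂ E₂ f hH hE hT₁.factHE hT₂.trivHE hT₁.trivKE h⟩
  have map_iff : Subgroup.map f K₁ = K₂ ↔ Subgroup.map f H₁ = H₂ :=
    ⟨fun h => surj_aux K₁ H₁ E₁ K₂ H₂ E₂ f hH hE hT₁.factHE hT₂.factKE hT₂.trivHE h,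
     fun h => surj_aux H₁ K₁ E₁ H₂ K₂ E₂ f hK hE hT₁.factKE hT₂.factHE hT₂.trivKE h⟩
  have bij_char : ∀ (A₁ : Subgroup G₁) (A₂ : Subgroup G₂), (∀ x ∈ A₁, f x ∈ A₂) →
      (Set.BijOn f (A₁ : Set G₁) (A₂ : Set G₂) ↔
        Set.InjOn f (A₁ : Set G₁) ∧ Subgroup.map f A₁ = A₂) := by
    intro A₁ A₂ hmaps
    constructor
    · rintro hb
      refine ⟨hb.injOn, SetLike.ext' ?_⟩
      rw [Subgroup.coe_map]
      exact hb.image_eq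
    · rintro ⟨i, hm⟩
      have himg : f '' (A₁ : Set G₁) = (A₂ : Set G₂) := by
        rw [← Subgroup.coe_map, hm]
      exact ⟨fun x hx => hmaps x hx, i, le_of_eq himg.symm⟩
  refine ⟨inj_iff, map_iff, ?_⟩
  rw [bij_char K₁ K₂ hK, bij_char H₁ H₂ hH, inj_iff, map_iff]
end

section
/- Let f: (G₁,K₁,H₁,E₁) → (G₂,K₂,H₂,E₂) be a morphism of trifactorised groups. Then: (1) if f(K₁) = K₂, then f: G₁ → G₂ is surjective; (2) if the restrictions of f to K₁ and to E₁ are both injective, then f: G₁ → G₂ is injective; (3) if the restriction of f to K₁ is a bijection onto K₂ and the restriction of f to E₁ is a bijection onto E₂, then f: G₁ → G₂ is a group isomorphism. -/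
/-- for a morphism `f` of trifactorised groups: if `f(K₁) = K₂` then
`f` is surjective; if `f|_{K₁}` and `f|_{E₁}` are injective then `f` is injective;
if `f|_{K₁}` and `f|_{E₁}` are bijections onto `K₂`, `E₂` then `f` is a group
isomorphism (bijective). -/
theorem stmt6 {G₁ G₂ : Type*} [Group G₁] [Group G₂]
    (K₁ H₁ E₁ : Subgroup G₁) (K₂ H₂ E₂ : Subgroup G₂)
    (hT₁ : IsTrifactorised K₁ H₁ E₁) (hT₂ : IsTrifactorised K₂ H₂ E₂)
    (f : G₁ →* G₂)
    (hK : ∀ x ∈ K₁, f x ∈ K₂) (hH : ∀ x ∈ H₁, f x ∈ H₂) (hE : ∀ x ∈ E₁, f x ∈ E₂) :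
    (Subgroup.map f K₁ = K₂ → Function.Surjective f) ∧
    (Set.InjOn f (K₁ : Set G₁) → Set.InjOn f (E₁ : Set G₁) →
      Function.Injective f) ∧
    (Set.BijOn f (K₁ : Set G₁) (K₂ : Set G₂) →
      Set.BijOn f (E₁ : Set G₁) (E₂ : Set G₂) → Function.Bijective f) := by
  have trivHE₂ : ∀ x ∈ H₂, x ∈ E₂ → x = (1 : G₂) := by
    intro x hx hx'
    have : x ∈ H₂ ⊓ E₂ := ⟨hx, hx'⟩
    rw [hT₂.trivHE, Subgroup.mem_bot] at this
    exact this
  have trivKE₂ : ∀ x ∈ K₂, x ∈ E₂ → x = (1 : G₂) := by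
    intro x hx hx'
    have : x ∈ K₂ ⊓ E₂ := ⟨hx, hx'⟩
    rw [hT₂.trivKE, Subgroup.mem_bot] at this
    exact this
  have surj : Subgroup.map f K₁ = K₂ → Function.Surjective f := by
    intro hmap g₂
    obtain ⟨k₂, hk₂, h₂, hh₂, rfl⟩ := hT₂.factKH g₂
    -- k₂ is in the image of K₁
    rw [← hmap] at hk₂
    obtain ⟨k₁, hk₁, rfl⟩ := hk₂
    -- show h₂ is in the image of H₁
    obtain ⟨k, hk', e, he, hde⟩ := hT₂.factKE h₂
    rw [← hmap] at hk'
    obtain ⟨k₁', hk₁', rfl⟩ := hk'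
    obtain ⟨h₁, hh₁, e₁, he₁, hk₁'eq⟩ := hT₁.factHE k₁'
    have hde2 : h₂ = f h₁ * (f e₁ * e) := by
      rw [hde, hk₁'eq, map_mul, mul_assoc]
    have key : (f h₁)⁻¹ * h₂ = f e₁ * e := by
      rw [hde2]; group
    have hmem : (f h₁)⁻¹ * h₂ = 1 := by
      apply trivHE₂
      · exact H₂.mul_mem (H₂.inv_mem (hH h₁ hh₁)) hh₂
      · rw [key]; exact E₂.mul_mem (hE e₁ he₁) he
    have hh₂eq : h₂ = f h₁ := by
      rw [← inv_mul_cancel (f h₁)] at hmem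
      exact mul_left_cancel hmem ▸ (by
        have := mul_left_cancel (a := (f h₁)⁻¹) (by rw [hmem, inv_mul_cancel])
        exact this)
    exact ⟨k₁ * h₁, by rw [map_mul, hh₂eq]⟩
  have inj : Set.InjOn f (K₁ : Set G₁) → Set.InjOn f (E₁ : Set G₁) →
      Function.Injective f := by
    intro hIK hIE
    rw [injective_iff_map_eq_one]
    intro g hg
    obtain ⟨k, hk, e, he, rfl⟩ := hT₁.factKE g
    rw [map_mul] at hg
    have hfk : f k = (f e)⁻¹ := by
      rw [eq_inv_iff_mul_eq_one]; exact hg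
    have hfk1 : f k = 1 := by
      apply trivKE₂ _ (hK k hk)
      rw [hfk]; exact E₂.inv_mem (hE e he)
    have hfe1 : f e = 1 := by
      rw [hfk1] at hg; simpa using hg
    have hk1 : k = 1 := hIK hk K₁.one_mem (by rw [hfk1, map_one])
    have he1 : e = 1 := hIE he E₁.one_mem (by rw [hfe1, map_one])
    rw [hk1, he1, mul_one]
  refine ⟨surj, inj, ?_⟩
  intro hBK hBE
  have hmap : Subgroup.map f K₁ = K₂ := by
    apply SetLike.coe_injective
    rw [Subgroup.coe_map]
    exact hBK.image_eq
  exact ⟨inj hBK.injOn hBE.injOn, surj hmap⟩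
end

section
/- Let (K,C,λ,δ) be brace data, and for i = 1,2 let ηᵢ: C → Eᵢ be surjective group homomorphisms with ker ηᵢ ≤ ker λ, with associated trifactorised groups (Gᵢ,K,Hᵢ,Eᵢ). If ker η₁ ≤ ker η₂, then the map f: G₁ → G₂ given by f(k·η₁(c)) = k·η₂(c) (for k ∈ K, c ∈ C) is a well-defined surjective morphism of trifactorised groups whose restriction to K is the identity. Moreover, if ker η₁ = ker η₂ then f is an isomorphism, so (G₁,K,H₁,E₁) ≅ (G₂,K,H₂,E₂). -/
open SemidirectProduct

/-- for two trifactorised groups associated with the same brace data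
via `η₁`, `η₂` with `ker η₁ ≤ ker η₂`, the map `k·η₁(c) ↦ k·η₂(c)` is a
well-defined surjective morphism of trifactorised groups restricting to the
identity on `K`, and it is an isomorphism when `ker η₁ = ker η₂`. -/
theorem stmt8 {K C E₁ E₂ : Type*} [Group K] [Group C] [Group E₁] [Group E₂]
    (lam : C →* MulAut K) (δ : C → K) (hδ : Function.Bijective δ)
    (hcoc : ∀ c c' : C, δ (c * c') = δ c * lam c (δ c'))
    (η₁ : C →* E₁) (η₂ : C →* E₂)
    (hη₁ : Function.Surjective η₁) (hη₂ : Function.Surjective η₂)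
    (hker₁ : η₁.ker ≤ lam.ker) (hker₂ : η₂.ker ≤ lam.ker)
    (lamb₁ : E₁ →* MulAut K) (lamb₂ : E₂ →* MulAut K)
    (hl₁ : ∀ c : C, lamb₁ (η₁ c) = lam c) (hl₂ : ∀ c : C, lamb₂ (η₂ c) = lam c)
    (h12 : η₁.ker ≤ η₂.ker) :
    ∃ f : (K ⋊[lamb₁] E₁) →* (K ⋊[lamb₂] E₂),
      -- defining property (well-definedness): f(k·η₁(c)) = k·η₂(c)
      (∀ (k : K) (c : C), f ⟨k, η₁ c⟩ = ⟨k, η₂ c⟩) ∧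
      -- morphism of trifactorised groups whose restriction to K is the identity:
      (∀ k : K, f (inl k) = inl k) ∧
      (∀ c : C, f ⟨δ c, η₁ c⟩ = ⟨δ c, η₂ c⟩) ∧
      (∀ e : E₁, ∃ e' : E₂, f (inr e) = inr e') ∧
      Function.Surjective f ∧
      -- if moreover ker η₁ = ker η₂ then f is an isomorphism:
      (η₁.ker = η₂.ker → Function.Bijective f) := by
  -- construct φ : E₁ →* E₂ with φ ∘ η₁ = η₂
  let φ : E₁ →* E₂ := η₁.liftOfSurjective hη₁ ⟨η₂, h12⟩
  have hφ : ∀ c : C, φ (η₁ c) = η₂ c := fun c =>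
    η₁.liftOfRightInverse_comp_apply _ _ ⟨η₂, h12⟩ c
  have hcompat : ∀ e : E₁,
      (MonoidHom.id K).comp (lamb₁ e).toMonoidHom
        = (lamb₂ (φ e)).toMonoidHom.comp (MonoidHom.id K) := by
    intro e
    obtain ⟨c, rfl⟩ := hη₁ e
    ext k
    simp [hφ, hl₁, hl₂]
  refine ⟨SemidirectProduct.map (MonoidHom.id K) φ hcompat, ?_, ?_, ?_, ?_, ?_, ?_⟩
  · intro k c
    ext <;> simp [SemidirectProduct.map, hφ]
  · intro k
    ext <;> simp [SemidirectProduct.map]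
  · intro c
    ext <;> simp [SemidirectProduct.map, hφ]
  · intro e
    exact ⟨φ e, by ext <;> simp [SemidirectProduct.map]⟩
  · intro ⟨k, e⟩
    obtain ⟨c, rfl⟩ := hη₂ e
    exact ⟨⟨k, η₁ c⟩, by ext <;> simp [SemidirectProduct.map, hφ]⟩
  · intro hkk
    constructor
    · intro ⟨k, e⟩ ⟨k', e'⟩ h
      obtain ⟨c, rfl⟩ := hη₁ e
      obtain ⟨c', rfl⟩ := hη₁ e'
      have h1 : k = k' := congrArg SemidirectProduct.left h
      have h2 : η₂ c = η₂ c' := by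
        have := congrArg SemidirectProduct.right h
        simpa [SemidirectProduct.map, hφ] using this
      have h3 : η₁ c = η₁ c' := by
        have : c⁻¹ * c' ∈ η₂.ker := by
          rw [MonoidHom.mem_ker]; simp [h2]
        rw [← hkk, MonoidHom.mem_ker] at this
        simp only [map_mul, map_inv] at this
        have := congrArg (η₁ c * ·) this
        simpa [mul_assoc] using this.symm
      ext <;> simp [h1, h3]
    · intro ⟨k, e⟩
      obtain ⟨c, rfl⟩ := hη₂ e
      exact ⟨⟨k, η₁ c⟩, by ext <;> simp [SemidirectProduct.map, hφ]⟩
end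

section
/- Let (K,C,λ,δ) be brace data and for i = 1,2 let ηᵢ: C → Eᵢ be surjective group homomorphisms with ker ηᵢ ≤ ker λ, with associated trifactorised groups (Gᵢ,K,Hᵢ,Eᵢ). Then (G₁,K,H₁,E₁) and (G₂,K,H₂,E₂) are isomorphic as trifactorised groups if and only if there exists an automorphism of the brace, i.e., a group automorphism f_K of K such that f_C := δ⁻¹ ∘ f_K ∘ δ is a group automorphism of C, with f_C(ker η₁) = ker η₂. -/
open SemidirectProduct

lemma stmt9_mem_range_inl {K E : Type*} [Group K] [Group E] (φ : E →* MulAut K)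
    (g : K ⋊[φ] E) : g ∈ Set.range (inl : K →* K ⋊[φ] E) ↔ g.right = 1 := by
  constructor
  · rintro ⟨k, rfl⟩; rfl
  · intro h; exact ⟨g.left, by ext <;> simp [h]⟩

lemma stmt9_mem_range_inr {K E : Type*} [Group K] [Group E] (φ : E →* MulAut K)
    (g : K ⋊[φ] E) : g ∈ Set.range (inr : E →* K ⋊[φ] E) ↔ g.left = 1 := by
  constructor
  · rintro ⟨e, rfl⟩; rfl
  · intro h; exact ⟨g.right, by ext <;> simp [h]⟩

lemma stmt9_image_eq {α β : Type*} (f : α → β) (hf : Function.Bijective f)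
    {S : Set α} {T : Set β} (h : ∀ x, f x ∈ T ↔ x ∈ S) : f '' S = T := by
  ext y
  obtain ⟨x, rfl⟩ := hf.2 y
  constructor
  · rintro ⟨x', hx', he⟩; cases hf.1 he; exact (h _).2 hx'
  · intro hy; exact ⟨x, (h x).1 hy, rfl⟩

/-- two trifactorised groups associated with the same brace data via
`η₁`, `η₂` are isomorphic (as trifactorised groups) iff there is a brace
automorphism `f_K` (with induced automorphism `f_C = δ⁻¹ ∘ f_K ∘ δ` of `C`) such
that `f_C(ker η₁) = ker η₂`. -/
theorem stmt9 {K C E₁ E₂ : Type*} [Group K] [Group C] [Group E₁] [Group E₂]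
    (lam : C →* MulAut K) (δ : C → K) (hδ : Function.Bijective δ)
    (hcoc : ∀ c c' : C, δ (c * c') = δ c * lam c (δ c'))
    (η₁ : C →* E₁) (η₂ : C →* E₂)
    (hη₁ : Function.Surjective η₁) (hη₂ : Function.Surjective η₂)
    (hker₁ : η₁.ker ≤ lam.ker) (hker₂ : η₂.ker ≤ lam.ker)
    (lamb₁ : E₁ →* MulAut K) (lamb₂ : E₂ →* MulAut K)
    (hl₁ : ∀ c : C, lamb₁ (η₁ c) = lam c) (hl₂ : ∀ c : C, lamb₂ (η₂ c) = lam c) :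
    (∃ f : (K ⋊[lamb₁] E₁) ≃* (K ⋊[lamb₂] E₂),
        ⇑f '' Set.range ⇑(inl : K →* K ⋊[lamb₁] E₁) =
          Set.range ⇑(inl : K →* K ⋊[lamb₂] E₂) ∧
        ⇑f '' {g : K ⋊[lamb₁] E₁ | ∃ c : C, g = ⟨δ c, η₁ c⟩} =
          {g : K ⋊[lamb₂] E₂ | ∃ c : C, g = ⟨δ c, η₂ c⟩} ∧
        ⇑f '' Set.range ⇑(inr : E₁ →* K ⋊[lamb₁] E₁) =
          Set.range ⇑(inr : E₂ →* K ⋊[lamb₂] E₂)) ↔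
      ∃ (fK : K ≃* K) (fC : C ≃ C),
        (∀ c : C, δ (fC c) = fK (δ c)) ∧
        (∀ c c' : C, fC (c * c') = fC c * fC c') ∧
        ⇑fC '' (η₁.ker : Set C) = (η₂.ker : Set C) := by
  have hmulH₁ : ∀ a b : C,
      (⟨δ a, η₁ a⟩ : K ⋊[lamb₁] E₁) * ⟨δ b, η₁ b⟩ = ⟨δ (a * b), η₁ (a * b)⟩ := by
    intro a b
    ext
    · show δ a * lamb₁ (η₁ a) (δ b) = δ (a * b)
      rw [hl₁, hcoc]
    · show η₁ a * η₁ b = η₁ (a * b)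
      rw [map_mul]
  have hmulH₂ : ∀ a b : C,
      (⟨δ a, η₂ a⟩ : K ⋊[lamb₂] E₂) * ⟨δ b, η₂ b⟩ = ⟨δ (a * b), η₂ (a * b)⟩ := by
    intro a b
    ext
    · show δ a * lamb₂ (η₂ a) (δ b) = δ (a * b)
      rw [hl₂, hcoc]
    · show η₂ a * η₂ b = η₂ (a * b)
      rw [map_mul]
  constructor
  · -- forward direction
    rintro ⟨f, hK, hH, hE⟩
    -- f maps inl K to inl K
    have hfinl : ∀ k : K, f (inl k) = inl ((f (inl k)).left) := by
      intro k
      have h1 : f (inl k) ∈ Set.range (inl : K →* K ⋊[lamb₂] E₂) := by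
        rw [← hK]; exact ⟨inl k, ⟨k, rfl⟩, rfl⟩
      rw [stmt9_mem_range_inl] at h1
      ext <;> simp [h1]
    have hfsinl : ∀ k : K, f.symm (inl k) = inl ((f.symm (inl k)).left) := by
      intro k
      have h1 : (inl k : K ⋊[lamb₂] E₂) ∈ ⇑f '' Set.range (inl : K →* K ⋊[lamb₁] E₁) := by
        rw [hK]; exact ⟨k, rfl⟩
      obtain ⟨x, ⟨k', rfl⟩, hx⟩ := h1
      have h2 : f.symm (inl k) = inl k' := by rw [← hx]; simp
      rw [h2]; simp
    -- fK
    set fK : K ≃* K :=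
      { toFun := fun k => (f (inl k)).left
        invFun := fun k => (f.symm (inl k)).left
        left_inv := fun k => by
          show (f.symm (inl ((f (inl k)).left))).left = k
          rw [← hfinl k]; simp
        right_inv := fun k => by
          show (f (inl ((f.symm (inl k)).left))).left = k
          rw [← hfsinl k]; simp
        map_mul' := fun a b => by
          show (f (inl (a * b))).left = (f (inl a)).left * (f (inl b)).left
          have h1 : (inl (a * b) : K ⋊[lamb₁] E₁) = inl a * inl b := map_mul inl a b
          rw [h1, map_mul f, hfinl a, hfinl b, ← map_mul inl]
          simp } with hfKdef
    have hfK : ∀ k : K, fK k = (f (inl k)).left := fun k => rfl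
    -- fC
    have hA : ∀ c : C, ∃ c' : C, f ⟨δ c, η₁ c⟩ = ⟨δ c', η₂ c'⟩ := by
      intro c
      have h1 : f ⟨δ c, η₁ c⟩ ∈ {g : K ⋊[lamb₂] E₂ | ∃ c : C, g = ⟨δ c, η₂ c⟩} := by
        rw [← hH]; exact ⟨⟨δ c, η₁ c⟩, ⟨c, rfl⟩, rfl⟩
      exact h1
    choose fCf hfCf using hA
    have hB : ∀ c : C, ∃ c' : C, f.symm ⟨δ c, η₂ c⟩ = ⟨δ c', η₁ c'⟩ := by
      intro c
      have hm : (⟨δ c, η₂ c⟩ : K ⋊[lamb₂] E₂) ∈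
          ⇑f '' {g : K ⋊[lamb₁] E₁ | ∃ c : C, g = ⟨δ c, η₁ c⟩} := by
        rw [hH]; exact ⟨c, rfl⟩
      obtain ⟨x, ⟨c', rfl⟩, hx⟩ := hm
      exact ⟨c', by rw [← hx]; simp⟩
    choose gCf hgCf using hB
    have hgf : ∀ c : C, gCf (fCf c) = c := by
      intro c
      have h1 : f.symm ⟨δ (fCf c), η₂ (fCf c)⟩ = ⟨δ c, η₁ c⟩ := by
        rw [← hfCf c]; simp
      rw [hgCf (fCf c)] at h1
      exact hδ.1 (congrArg SemidirectProduct.left h1)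
    have hfg : ∀ c : C, fCf (gCf c) = c := by
      intro c
      have h1 : f ⟨δ (gCf c), η₁ (gCf c)⟩ = ⟨δ c, η₂ c⟩ := by
        rw [← hgCf c]; simp
      rw [hfCf (gCf c)] at h1
      exact hδ.1 (congrArg SemidirectProduct.left h1)
    refine ⟨fK, ⟨fCf, gCf, hgf, hfg⟩, ?_, ?_, ?_⟩
    · -- δ ∘ fC = fK ∘ δ
      intro c
      show δ (fCf c) = fK (δ c)
      have hinr : f (inr (η₁ c)) = inr ((f (inr (η₁ c))).right) := by
        have h1 : f (inr (η₁ c)) ∈ Set.range (inr : E₂ →* K ⋊[lamb₂] E₂) := by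
          rw [← hE]; exact ⟨inr (η₁ c), ⟨η₁ c, rfl⟩, rfl⟩
        rw [stmt9_mem_range_inr] at h1
        ext <;> simp [h1]
      have h2 : f ⟨δ c, η₁ c⟩ = ⟨fK (δ c), (f (inr (η₁ c))).right⟩ := by
        rw [mk_eq_inl_mul_inr, map_mul, hfinl, hinr, ← hfK]
        ext <;> simp
      have h3 := (hfCf c).symm.trans h2
      exact congrArg SemidirectProduct.left h3
    · -- multiplicativity
      intro a b
      show fCf (a * b) = fCf a * fCf b
      apply hδ.1
      have h2 : f ⟨δ (a * b), η₁ (a * b)⟩ = ⟨δ (fCf a * fCf b), η₂ (fCf a * fCf b)⟩ := by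
        rw [← hmulH₁ a b, map_mul, hfCf a, hfCf b, hmulH₂]
      have h3 := (hfCf (a * b)).symm.trans h2
      exact congrArg SemidirectProduct.left h3
    · -- kernels
      have hiff : ∀ c : C, η₂ (fCf c) = 1 ↔ η₁ c = 1 := by
        intro c
        constructor
        · intro h
          have h1 : f ⟨δ c, η₁ c⟩ ∈ Set.range (inl : K →* K ⋊[lamb₂] E₂) := by
            rw [stmt9_mem_range_inl, hfCf c]
            exact h
          rw [← hK] at h1
          obtain ⟨x, hx, hx2⟩ := h1
          have h2 : x = ⟨δ c, η₁ c⟩ := f.injective hx2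
          rw [h2, stmt9_mem_range_inl] at hx
          exact hx
        · intro h
          have h1 : f ⟨δ c, η₁ c⟩ ∈ Set.range (inl : K →* K ⋊[lamb₂] E₂) := by
            rw [← hK]
            refine ⟨⟨δ c, η₁ c⟩, ?_, rfl⟩
            rw [stmt9_mem_range_inl]
            exact h
          rw [stmt9_mem_range_inl, hfCf c] at h1
          exact h1
      ext x
      simp only [Equiv.coe_fn_mk, Set.mem_image, SetLike.mem_coe, MonoidHom.mem_ker]
      constructor
      · rintro ⟨c, hc, rfl⟩; exact (hiff c).2 hc
      · intro hx
        exact ⟨gCf x, (hiff (gCf x)).1 (by rw [hfg x]; exact hx), hfg x⟩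
  · -- backward direction
    rintro ⟨fK, fC, hδfC, hmulC, hkerC⟩
    -- basic facts about fC
    have hC1 : fC 1 = 1 := by
      have h := hmulC 1 1
      rw [mul_one] at h
      nth_rewrite 1 [← mul_one (fC 1)] at h
      exact (mul_left_cancel h).symm
    have hCinv : ∀ c : C, fC c⁻¹ = (fC c)⁻¹ := by
      intro c
      have h := hmulC c⁻¹ c
      rw [inv_mul_cancel, hC1] at h
      exact eq_inv_of_mul_eq_one_left h.symm
    have hmulCs : ∀ a b : C, fC.symm (a * b) = fC.symm a * fC.symm b := by
      intro a b
      apply fC.injective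
      rw [hmulC, fC.apply_symm_apply, fC.apply_symm_apply, fC.apply_symm_apply]
    have hCinv' : ∀ a : C, fC.symm a⁻¹ = (fC.symm a)⁻¹ := by
      intro a
      apply fC.injective
      simp [hCinv]
    -- well-definedness
    have hwd : ∀ a b : C, η₁ a = η₁ b → η₂ (fC a) = η₂ (fC b) := by
      intro a b hab
      have h1 : a⁻¹ * b ∈ η₁.ker := by
        rw [MonoidHom.mem_ker, map_mul, map_inv, hab, inv_mul_cancel]
      have h2 : fC (a⁻¹ * b) ∈ η₂.ker := by
        have : fC (a⁻¹ * b) ∈ ⇑fC '' (η₁.ker : Set C) := ⟨_, h1, rfl⟩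
        rw [hkerC] at this
        exact this
      rw [hmulC, hCinv, MonoidHom.mem_ker, map_mul, map_inv] at h2
      exact inv_mul_eq_one.mp h2
    have hker' : ∀ x : C, x ∈ η₂.ker → fC.symm x ∈ η₁.ker := by
      intro x hx
      have : x ∈ ⇑fC '' (η₁.ker : Set C) := by rw [hkerC]; exact hx
      obtain ⟨y, hy, rfl⟩ := this
      simpa using hy
    have hwd' : ∀ a b : C, η₂ a = η₂ b → η₁ (fC.symm a) = η₁ (fC.symm b) := by
      intro a b hab
      have h1 : a⁻¹ * b ∈ η₂.ker := by
        rw [MonoidHom.mem_ker, map_mul, map_inv, hab, inv_mul_cancel]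
      have h2 := hker' _ h1
      rw [hmulCs, hCinv', MonoidHom.mem_ker, map_mul, map_inv] at h2
      exact inv_mul_eq_one.mp h2
    -- the induced maps on E₁, E₂
    set fE : E₁ → E₂ := fun e => η₂ (fC (Function.surjInv hη₁ e)) with hfEdef
    have hfE : ∀ c : C, fE (η₁ c) = η₂ (fC c) := fun c =>
      hwd _ _ (Function.surjInv_eq hη₁ (η₁ c))
    set fE' : E₂ → E₁ := fun e => η₁ (fC.symm (Function.surjInv hη₂ e)) with hfE'def
    have hfE' : ∀ c : C, fE' (η₂ c) = η₁ (fC.symm c) := fun c =>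
      hwd' _ _ (Function.surjInv_eq hη₂ (η₂ c))
    have hEl : ∀ e : E₁, fE' (fE e) = e := by
      intro e; obtain ⟨c, rfl⟩ := hη₁ e
      rw [hfE, hfE', fC.symm_apply_apply]
    have hEr : ∀ e : E₂, fE (fE' e) = e := by
      intro e; obtain ⟨c, rfl⟩ := hη₂ e
      rw [hfE', hfE, fC.apply_symm_apply]
    have hEmul : ∀ e e' : E₁, fE (e * e') = fE e * fE e' := by
      intro e e'
      obtain ⟨c, rfl⟩ := hη₁ e; obtain ⟨c', rfl⟩ := hη₁ e'
      have h := hfE (c * c')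
      rw [map_mul] at h
      rw [h, hmulC, map_mul, hfE c, hfE c']
    have hfE1 : fE 1 = 1 := by
      rw [← map_one η₁, hfE, hC1, map_one]
    -- equivariance
    have hequiv : ∀ (e : E₁) (k : K), fK (lamb₁ e k) = lamb₂ (fE e) (fK k) := by
      intro e k
      obtain ⟨c, rfl⟩ := hη₁ e
      obtain ⟨c', rfl⟩ := hδ.2 k
      rw [hl₁, hfE, hl₂]
      have h1 : lam c (δ c') = (δ c)⁻¹ * δ (c * c') := by rw [hcoc]; group
      have h2 : lam (fC c) (δ (fC c')) = (δ (fC c))⁻¹ * δ (fC c * fC c') := by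
        rw [hcoc]; group
      rw [← hδfC c', h2, ← hmulC, hδfC, hδfC, h1, map_mul, map_inv]
    -- the isomorphism
    set F : (K ⋊[lamb₁] E₁) ≃* (K ⋊[lamb₂] E₂) :=
      { toFun := fun g => ⟨fK g.left, fE g.right⟩
        invFun := fun g => ⟨fK.symm g.left, fE' g.right⟩
        left_inv := fun g => by ext <;> simp [hEl]
        right_inv := fun g => by ext <;> simp [hEr]
        map_mul' := fun a b => by
          ext
          · show fK (a.left * lamb₁ a.right b.left) = fK a.left * lamb₂ (fE a.right) (fK b.left)
            rw [map_mul, hequiv]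
          · show fE (a.right * b.right) = fE a.right * fE b.right
            exact hEmul _ _ } with hFdef
    have hF : ∀ g : K ⋊[lamb₁] E₁, F g = ⟨fK g.left, fE g.right⟩ := fun g => rfl
    have hFH : ∀ c : C, F ⟨δ c, η₁ c⟩ = ⟨δ (fC c), η₂ (fC c)⟩ := by
      intro c
      rw [hF]
      ext
      · exact (hδfC c).symm
      · exact hfE c
    refine ⟨F, ?_, ?_, ?_⟩
    · apply stmt9_image_eq _ F.bijective
      intro x
      rw [stmt9_mem_range_inl, stmt9_mem_range_inl, hF]
      show fE x.right = 1 ↔ x.right = 1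
      constructor
      · intro h
        have h2 : fE x.right = fE 1 := by rw [h, hfE1]
        have h3 := congrArg fE' h2
        rwa [hEl, hEl] at h3
      · intro h; rw [h, hfE1]
    · apply stmt9_image_eq _ F.bijective
      intro x
      simp only [Set.mem_setOf_eq]
      constructor
      · rintro ⟨c', hc'⟩
        exact ⟨fC.symm c', F.injective (by rw [hFH, fC.apply_symm_apply, ← hc'])⟩
      · rintro ⟨c, rfl⟩
        exact ⟨fC c, hFH c⟩
    · apply stmt9_image_eq _ F.bijective
      intro x
      rw [stmt9_mem_range_inr, stmt9_mem_range_inr, hF]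
      show fK x.left = 1 ↔ x.left = 1
      constructor
      · intro h
        have := congrArg fK.symm h
        simpa using this
      · intro h; rw [h, map_one]
end

section
/- Let (K,C,λ,δ) be brace data and let Ω be the set of normal subgroups N of C with N ≤ ker λ. For N ∈ Ω let T(N) denote the trifactorised group associated with the brace via the natural projection η_N: C → C/N. Then: (1) for N, M ∈ Ω, T(N) and T(M) are isomorphic as trifactorised groups if and only if there is a brace automorphism (a group automorphism f_K of K such that f_C := δ⁻¹ ∘ f_K ∘ δ is a group automorphism of C) with f_C(N) = M; (2) every trifactorised group associated with the brace via some surjective homomorphism η with ker η ≤ ker λ is isomorphic to T(N) for some N ∈ Ω. Consequently, N ↦ T(N) induces a bijection between the orbits of the brace automorphism group acting on Ω and the isomorphism classes of trifactorised groups associated with the brace. -/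
open SemidirectProduct

/-- The action of `C ⧸ N` on `K` induced by `λ` when `N ≤ ker λ`. -/
def lambQ {K C : Type*} [Group K] [Group C] (lam : C →* MulAut K)
    (N : Subgroup C) [N.Normal] (hN : N ≤ lam.ker) : C ⧸ N →* MulAut K :=
  QuotientGroup.lift N lam fun _ hx => MonoidHom.mem_ker.mp (hN hx)

/-- Isomorphism of trifactorised groups: a group isomorphism carrying each of the
three distinguished subgroups onto the corresponding one. -/
def IsTrifacIso {G₁ G₂ : Type*} [Group G₁] [Group G₂]
    (K₁ H₁ E₁ : Set G₁) (K₂ H₂ E₂ : Set G₂) : Prop :=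
  ∃ f : G₁ ≃* G₂, ⇑f '' K₁ = K₂ ∧ ⇑f '' H₁ = H₂ ∧ ⇑f '' E₁ = E₂

/-- The trifactorised group associated via `η : C →* E` is isomorphic (as a
trifactorised group) to the one `T(N)` associated via the natural projection
`C →* C ⧸ N`. -/
def IsoToQuotTrifac (K C : Type*) [Group K] [Group C]
    (lam : C →* MulAut K) (δ : C → K)
    (E : Type*) [Group E] (η : C →* E) (lamb : E →* MulAut K)
    (N : Subgroup C) [N.Normal] (hN : N ≤ lam.ker) : Prop :=
  IsTrifacIso
    (Set.range ⇑(inl : K →* K ⋊[lamb] E))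
    {g : K ⋊[lamb] E | ∃ c : C, g = ⟨δ c, η c⟩}
    (Set.range ⇑(inr : E →* K ⋊[lamb] E))
    (Set.range ⇑(inl : K →* K ⋊[lambQ lam N hN] (C ⧸ N)))
    {g : K ⋊[lambQ lam N hN] (C ⧸ N) | ∃ c : C, g = ⟨δ c, QuotientGroup.mk' N c⟩}
    (Set.range ⇑(inr : (C ⧸ N) →* K ⋊[lambQ lam N hN] (C ⧸ N)))

namespace Stmt10Aux

/-- Isomorphism of semidirect products from compatible isomorphisms of the factors. -/
def sdpCongr {K E₁ E₂ : Type*} [Group K] [Group E₁] [Group E₂]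
    (φ₁ : E₁ →* MulAut K) (φ₂ : E₂ →* MulAut K)
    (fK : K ≃* K) (fE : E₁ ≃* E₂)
    (h : ∀ e k, fK (φ₁ e k) = φ₂ (fE e) (fK k)) :
    (K ⋊[φ₁] E₁) ≃* (K ⋊[φ₂] E₂) where
  toFun g := ⟨fK g.left, fE g.right⟩
  invFun g := ⟨fK.symm g.left, fE.symm g.right⟩
  left_inv g := by ext <;> simp
  right_inv g := by ext <;> simp
  map_mul' g g' := by
    ext
    · show fK (g.left * φ₁ g.right g'.left) = fK g.left * φ₂ (fE g.right) (fK g'.left)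
      rw [map_mul, h]
    · show fE (g.right * g'.right) = fE g.right * fE g'.right
      rw [map_mul]

@[simp] lemma sdpCongr_apply {K E₁ E₂ : Type*} [Group K] [Group E₁] [Group E₂]
    (φ₁ : E₁ →* MulAut K) (φ₂ : E₂ →* MulAut K)
    (fK : K ≃* K) (fE : E₁ ≃* E₂)
    (h : ∀ e k, fK (φ₁ e k) = φ₂ (fE e) (fK k)) (g : K ⋊[φ₁] E₁) :
    sdpCongr φ₁ φ₂ fK fE h g = ⟨fK g.left, fE g.right⟩ := rfl

lemma sdpCongr_image_inl {K E₁ E₂ : Type*} [Group K] [Group E₁] [Group E₂]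
    (φ₁ : E₁ →* MulAut K) (φ₂ : E₂ →* MulAut K)
    (fK : K ≃* K) (fE : E₁ ≃* E₂)
    (h : ∀ e k, fK (φ₁ e k) = φ₂ (fE e) (fK k)) :
    ⇑(sdpCongr φ₁ φ₂ fK fE h) '' Set.range ⇑(inl : K →* K ⋊[φ₁] E₁)
      = Set.range ⇑(inl : K →* K ⋊[φ₂] E₂) := by
  have hc : ⇑(sdpCongr φ₁ φ₂ fK fE h) ∘ ⇑(inl : K →* K ⋊[φ₁] E₁)
      = ⇑(inl : K →* K ⋊[φ₂] E₂) ∘ ⇑fK := by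
    funext k
    show (⟨fK k, fE 1⟩ : K ⋊[φ₂] E₂) = inl (fK k)
    ext <;> simp
  rw [← Set.range_comp, hc, Set.range_comp, fK.surjective.range_eq, Set.image_univ]

lemma sdpCongr_image_inr {K E₁ E₂ : Type*} [Group K] [Group E₁] [Group E₂]
    (φ₁ : E₁ →* MulAut K) (φ₂ : E₂ →* MulAut K)
    (fK : K ≃* K) (fE : E₁ ≃* E₂)
    (h : ∀ e k, fK (φ₁ e k) = φ₂ (fE e) (fK k)) :
    ⇑(sdpCongr φ₁ φ₂ fK fE h) '' Set.range ⇑(inr : E₁ →* K ⋊[φ₁] E₁)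
      = Set.range ⇑(inr : E₂ →* K ⋊[φ₂] E₂) := by
  have hc : ⇑(sdpCongr φ₁ φ₂ fK fE h) ∘ ⇑(inr : E₁ →* K ⋊[φ₁] E₁)
      = ⇑(inr : E₂ →* K ⋊[φ₂] E₂) ∘ ⇑fE := by
    funext e
    show (⟨fK 1, fE e⟩ : K ⋊[φ₂] E₂) = inr (fE e)
    ext <;> simp
  rw [← Set.range_comp, hc, Set.range_comp, fE.surjective.range_eq, Set.image_univ]

lemma mem_range_inl_iff {K E : Type*} [Group K] [Group E] {φ : E →* MulAut K}
    (g : K ⋊[φ] E) :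
    g ∈ Set.range ⇑(inl : K →* K ⋊[φ] E) ↔ g.right = 1 := by
  constructor
  · rintro ⟨k, rfl⟩; simp
  · intro h; exact ⟨g.left, by ext <;> simp [h]⟩

lemma hpair_mul {K C : Type*} [Group K] [Group C] (lam : C →* MulAut K) (δ : C → K)
    (hcoc : ∀ c c' : C, δ (c * c') = δ c * lam c (δ c'))
    (N : Subgroup C) [N.Normal] (hN : N ≤ lam.ker) (c c' : C) :
    (⟨δ c, QuotientGroup.mk' N c⟩ : K ⋊[lambQ lam N hN] (C ⧸ N))
        * ⟨δ c', QuotientGroup.mk' N c'⟩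
      = ⟨δ (c * c'), QuotientGroup.mk' N (c * c')⟩ := by
  ext
  · show δ c * lam c (δ c') = δ (c * c')
    exact (hcoc c c').symm
  · show QuotientGroup.mk' N c * QuotientGroup.mk' N c' = QuotientGroup.mk' N (c * c')
    exact (map_mul _ _ _).symm

end Stmt10Aux

open Stmt10Aux in
theorem stmt10 {K C : Type*} [Group K] [Group C]
    (lam : C →* MulAut K) (δ : C → K) (hδ : Function.Bijective δ)
    (hcoc : ∀ c c' : C, δ (c * c') = δ c * lam c (δ c')) :
    (∀ (N M : Subgroup C) [N.Normal] [M.Normal]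
        (hN : N ≤ lam.ker) (hM : M ≤ lam.ker),
      IsoToQuotTrifac K C lam δ (C ⧸ N) (QuotientGroup.mk' N) (lambQ lam N hN)
          M hM ↔
        ∃ (fK : K ≃* K) (fC : C ≃ C),
          (∀ c : C, δ (fC c) = fK (δ c)) ∧
          (∀ c c' : C, fC (c * c') = fC c * fC c') ∧
          ⇑fC '' (N : Set C) = (M : Set C)) ∧
    (∀ (E : Type*) [Group E] (η : C →* E), Function.Surjective η →
      η.ker ≤ lam.ker → ∀ (lamb : E →* MulAut K), (∀ c : C, lamb (η c) = lam c) →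
        ∃ (N : Subgroup C) (hNn : N.Normal) (hN : N ≤ lam.ker),
          @IsoToQuotTrifac K C _ _ lam δ E _ η lamb N hNn hN) := by
  constructor
  · intro N M _ _ hN hM
    constructor
    · -- forward direction
      rintro ⟨f, hKim, hHim, hEim⟩
      -- the map induced on K
      have hfK : ∀ k : K, f (inl k)
          = inl ((f (inl k)).left : K) := by
        intro k
        have : f (inl k) ∈ Set.range ⇑(inl : K →* K ⋊[lambQ lam M hM] (C ⧸ M)) := by
          rw [← hKim]; exact ⟨inl k, ⟨k, rfl⟩, rfl⟩
        obtain ⟨k', hk'⟩ := this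
        rw [← hk']; simp
      set fKf : K → K := fun k => (f (inl k)).left with hfKf
      have hKmul : ∀ a b : K, fKf (a * b) = fKf a * fKf b := by
        intro a b
        have h1 : f (inl (a * b)) = inl (fKf a * fKf b) := by
          rw [map_mul (inl : K →* K ⋊[lambQ lam N hN] (C ⧸ N)), map_mul f,
            hfK a, hfK b, ← map_mul]
        exact congrArg SemidirectProduct.left h1
      have hKinj : Function.Injective fKf := by
        intro a b hab
        have : f (inl a) = f (inl b) := by
          rw [hfK a, hfK b]
          exact congrArg (⇑(inl : K →* K ⋊[lambQ lam M hM] (C ⧸ M))) hab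
        exact inl_injective (f.injective this)
      have hKsurj : Function.Surjective fKf := by
        intro k'
        have : (inl k' : K ⋊[lambQ lam M hM] (C ⧸ M)) ∈
            ⇑f '' Set.range ⇑(inl : K →* K ⋊[lambQ lam N hN] (C ⧸ N)) := by
          rw [hKim]; exact ⟨k', rfl⟩
        obtain ⟨x, ⟨k, rfl⟩, hx⟩ := this
        refine ⟨k, ?_⟩
        have : inl (fKf k) = (inl k' : K ⋊[lambQ lam M hM] (C ⧸ M)) := by
          rw [← hfK k, hx]
        exact inl_injective this
      let fK : K ≃* K := MulEquiv.mk' (Equiv.ofBijective fKf ⟨hKinj, hKsurj⟩) hKmul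
      let δe : C ≃ K := Equiv.ofBijective δ hδ
      let fC : C ≃ C := δe.trans (fK.toEquiv.trans δe.symm)
      have hdfC : ∀ c : C, δ (fC c) = fK (δ c) := by
        intro c
        show δe (δe.symm (fK (δe c))) = fK (δ c)
        rw [Equiv.apply_symm_apply]
        rfl
      -- the image of inr is inr
      have hfinr : ∀ q : C ⧸ N, ∃ q' : C ⧸ M, f (inr q) = inr q' := by
        intro q
        have : f (inr q) ∈ Set.range ⇑(inr : (C ⧸ M) →* K ⋊[lambQ lam M hM] (C ⧸ M)) := by
          rw [← hEim]; exact ⟨inr q, ⟨q, rfl⟩, rfl⟩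
        obtain ⟨q', hq'⟩ := this
        exact ⟨q', hq'.symm⟩
      -- key: f maps the pair for c to the pair for fC c
      have hfh : ∀ c : C, f ⟨δ c, QuotientGroup.mk' N c⟩
          = ⟨δ (fC c), QuotientGroup.mk' M (fC c)⟩ := by
        intro c
        have hmem : f ⟨δ c, QuotientGroup.mk' N c⟩ ∈
            {g : K ⋊[lambQ lam M hM] (C ⧸ M) | ∃ c : C, g = ⟨δ c, QuotientGroup.mk' M c⟩} := by
          rw [← hHim]; exact ⟨_, ⟨c, rfl⟩, rfl⟩
        obtain ⟨c', hc'⟩ := hmem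
        -- compute the left component
        have hsplit : (⟨δ c, QuotientGroup.mk' N c⟩ : K ⋊[lambQ lam N hN] (C ⧸ N))
            = inl (δ c) * inr (QuotientGroup.mk' N c) := by
          ext <;> simp
        obtain ⟨q', hq'⟩ := hfinr (QuotientGroup.mk' N c)
        have hleft : (f ⟨δ c, QuotientGroup.mk' N c⟩).left = fKf (δ c) := by
          rw [hsplit, map_mul, hfK (δ c), hq']
          simp
          rfl
        have h2 : δ c' = fKf (δ c) := by
          have := congrArg SemidirectProduct.left hc'
          rw [hleft] at this
          exact this.symm
        have hdc' : δ c' = δ (fC c) := h2.trans (hdfC c).symm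
        have hcc' : c' = fC c := hδ.1 hdc'
        rw [hc', hcc']
      -- multiplicativity of fC
      have hCmul : ∀ c c' : C, fC (c * c') = fC c * fC c' := by
        intro c c'
        have h1 : f ⟨δ (c * c'), QuotientGroup.mk' N (c * c')⟩
            = ⟨δ (fC c * fC c'), QuotientGroup.mk' M (fC c * fC c')⟩ := by
          rw [← hpair_mul lam δ hcoc N hN, map_mul, hfh c, hfh c',
            hpair_mul lam δ hcoc M hM]
        rw [hfh (c * c')] at h1
        have := congrArg SemidirectProduct.left h1
        exact hδ.1 this
      -- fC maps N onto M
      have hrange : ∀ y : K ⋊[lambQ lam N hN] (C ⧸ N),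
          f y ∈ Set.range ⇑(inl : K →* K ⋊[lambQ lam M hM] (C ⧸ M)) ↔
            y ∈ Set.range ⇑(inl : K →* K ⋊[lambQ lam N hN] (C ⧸ N)) := by
        intro y
        rw [← hKim]
        exact f.injective.mem_set_image
      have hmem : ∀ c : C, c ∈ N ↔ fC c ∈ M := by
        intro c
        have h1 : c ∈ N ↔ (⟨δ c, QuotientGroup.mk' N c⟩ : K ⋊[lambQ lam N hN] (C ⧸ N))
            ∈ Set.range ⇑(inl : K →* K ⋊[lambQ lam N hN] (C ⧸ N)) := by
          rw [mem_range_inl_iff]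
          show c ∈ N ↔ (QuotientGroup.mk' N c : C ⧸ N) = 1
          rw [QuotientGroup.mk'_apply, QuotientGroup.eq_one_iff]
        have h2 : fC c ∈ M ↔ (⟨δ (fC c), QuotientGroup.mk' M (fC c)⟩ :
            K ⋊[lambQ lam M hM] (C ⧸ M))
            ∈ Set.range ⇑(inl : K →* K ⋊[lambQ lam M hM] (C ⧸ M)) := by
          rw [mem_range_inl_iff]
          show fC c ∈ M ↔ (QuotientGroup.mk' M (fC c) : C ⧸ M) = 1
          rw [QuotientGroup.mk'_apply, QuotientGroup.eq_one_iff]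
        rw [h1, h2, ← hfh c, hrange]
      refine ⟨fK, fC, hdfC, hCmul, ?_⟩
      ext m
      constructor
      · rintro ⟨n, hn, rfl⟩
        exact (hmem n).1 hn
      · intro hm
        refine ⟨fC.symm m, ?_, fC.apply_symm_apply m⟩
        have := hmem (fC.symm m)
        rw [fC.apply_symm_apply] at this
        exact this.2 hm
    · -- backward direction
      rintro ⟨fK, fC, hdel, hmul, him⟩
      have key : ∀ (c : C) (k : K), fK (lam c k) = lam (fC c) (fK k) := by
        intro c k
        obtain ⟨c', rfl⟩ := hδ.2 k
        have h1 := hdel (c * c')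
        rw [hmul, hcoc, hcoc, map_mul, hdel c, hdel c'] at h1
        exact (mul_left_cancel h1).symm
      let fCm : C ≃* C := MulEquiv.mk' fC hmul
      have hmap : N.map fCm.toMonoidHom = M := by
        apply SetLike.ext'
        rw [Subgroup.coe_map]
        exact him
      let φ : C ⧸ N ≃* C ⧸ M := QuotientGroup.congr N M fCm hmap
      have hφ : ∀ c : C, φ (QuotientGroup.mk' N c) = QuotientGroup.mk' M (fC c) := by
        intro c; rfl
      have hcomp : ∀ (q : C ⧸ N) (k : K),
          fK (lambQ lam N hN q k) = lambQ lam M hM (φ q) (fK k) := by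
        intro q k
        induction q using QuotientGroup.induction_on with
        | H c =>
          show fK (lambQ lam N hN (QuotientGroup.mk' N c) k)
            = lambQ lam M hM (φ (QuotientGroup.mk' N c)) (fK k)
          rw [hφ c]
          exact key c k
      refine ⟨sdpCongr _ _ fK φ hcomp, sdpCongr_image_inl _ _ _ _ _, ?_,
        sdpCongr_image_inr _ _ _ _ _⟩
      ext g
      constructor
      · rintro ⟨x, ⟨c, rfl⟩, rfl⟩
        refine ⟨fC c, ?_⟩
        rw [sdpCongr_apply]
        show (⟨fK (δ c), φ (QuotientGroup.mk' N c)⟩ :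
          K ⋊[lambQ lam M hM] (C ⧸ M)) = _
        rw [hφ, ← hdel]
      · rintro ⟨c, rfl⟩
        refine ⟨⟨δ (fC.symm c), QuotientGroup.mk' N (fC.symm c)⟩, ⟨fC.symm c, rfl⟩, ?_⟩
        rw [sdpCongr_apply]
        show (⟨fK (δ (fC.symm c)), φ (QuotientGroup.mk' N (fC.symm c))⟩ :
          K ⋊[lambQ lam M hM] (C ⧸ M)) = _
        rw [hφ, ← hdel, fC.apply_symm_apply]
  · -- part 2
    intro E _ η hsurj hker lamb hlamb
    refine ⟨η.ker, inferInstance, hker, ?_⟩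
    let e : C ⧸ η.ker ≃* E := QuotientGroup.quotientKerEquivOfSurjective η hsurj
    have he : ∀ c : C, e (QuotientGroup.mk' η.ker c) = η c := fun c => rfl
    have hes : ∀ c : C, e.symm (η c) = QuotientGroup.mk' η.ker c := by
      intro c
      rw [← he c, MulEquiv.symm_apply_apply]
    have hcomp : ∀ (x : E) (k : K),
        (MulEquiv.refl K) (lamb x k)
          = lambQ lam η.ker hker (e.symm x) ((MulEquiv.refl K) k) := by
      intro x k
      obtain ⟨c, rfl⟩ := hsurj x
      rw [hes c]
      show lamb (η c) k = lam c k
      rw [hlamb c]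
    refine ⟨sdpCongr lamb (lambQ lam η.ker hker) (MulEquiv.refl K) e.symm hcomp,
      sdpCongr_image_inl _ _ _ _ _, ?_, sdpCongr_image_inr _ _ _ _ _⟩
    ext g
    constructor
    · rintro ⟨x, ⟨c, rfl⟩, rfl⟩
      refine ⟨c, ?_⟩
      rw [sdpCongr_apply]
      show (⟨(MulEquiv.refl K) (δ c), e.symm (η c)⟩ :
        K ⋊[lambQ lam η.ker hker] (C ⧸ η.ker)) = _
      rw [hes c]
      rfl
    · rintro ⟨c, rfl⟩
      refine ⟨⟨δ c, η c⟩, ⟨c, rfl⟩, ?_⟩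
      rw [sdpCongr_apply]
      show (⟨(MulEquiv.refl K) (δ c), e.symm (η c)⟩ :
        K ⋊[lambQ lam η.ker hker] (C ⧸ η.ker)) = _
      rw [hes c]
      rfl
end

section
/- Let (K,C,λ,δ) be brace data and let (G,K,H,E) be the trifactorised group associated with the brace via a surjective group homomorphism η: C → E with ker η ≤ ker λ. Then: (1) (G,K,H,E) is isomorphic as a trifactorised group to the large trifactorised group (the one associated via the identity homomorphism id: C → C) if and only if ker η = 1; (2) (G,K,H,E) is isomorphic as a trifactorised group to the small trifactorised group (the one associated via λ: C → λ(C) ≤ Aut(K)) if and only if ker η = ker λ. -/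
open SemidirectProduct

/-- Auxiliary: extraction of a kernel-comparing map from a trifactorised isomorphism. -/
lemma fwd_aux {K C E E' : Type*} [Group K] [Group C] [Group E] [Group E']
    (lam : C →* MulAut K) (δ : C → K) (hδ1 : δ 1 = 1) (hδi : Function.Injective δ)
    (η : C →* E) (η' : C →* E')
    (lamb : E →* MulAut K) (lamb' : E' →* MulAut K)
    (hl : ∀ c, lamb (η c) = lam c) (hl' : ∀ c, lamb' (η' c) = lam c)
    (f : (K ⋊[lamb] E) ≃* (K ⋊[lamb'] E'))
    (hK : ⇑f '' Set.range ⇑(inl : K →* K ⋊[lamb] E)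
        = Set.range ⇑(inl : K →* K ⋊[lamb'] E'))
    (hH : ⇑f '' {g : K ⋊[lamb] E | ∃ c : C, g = ⟨δ c, η c⟩}
        = {g : K ⋊[lamb'] E' | ∃ c : C, g = ⟨δ c, η' c⟩})
    (hE : ⇑f '' Set.range ⇑(inr : E →* K ⋊[lamb] E)
        = Set.range ⇑(inr : E' →* K ⋊[lamb'] E')) :
    ∃ Φ : C → C, Function.Injective Φ ∧ Φ 1 = 1 ∧
      (∀ c, η c = 1 ↔ η' (Φ c) = 1) ∧ (∀ c, lam c = 1 ↔ lam (Φ c) = 1) := by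
  -- the action of f on the K-part
  have hα0 : ∀ k : K, ∃ k' : K, f (inl k) = inl k' := by
    intro k
    have : f (inl k) ∈ Set.range ⇑(inl : K →* K ⋊[lamb'] E') := by
      rw [← hK]; exact ⟨inl k, ⟨k, rfl⟩, rfl⟩
    obtain ⟨k', h⟩ := this
    exact ⟨k', h.symm⟩
  choose α hα using hα0
  have αinj : Function.Injective α := by
    intro k₁ k₂ h
    have : f (inl k₁) = f (inl k₂) := by rw [hα, hα, h]
    exact inl_injective (f.injective this)
  have αsurj : Function.Surjective α := by
    intro k'
    have : (inl k' : K ⋊[lamb'] E') ∈ ⇑f '' Set.range ⇑(inl : K →* K ⋊[lamb] E) := by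
      rw [hK]; exact ⟨k', rfl⟩
    obtain ⟨x, ⟨k, rfl⟩, hx⟩ := this
    exact ⟨k, inl_injective (by rw [← hα, hx])⟩
  have α1 : α 1 = 1 := by
    have : (inl (α 1) : K ⋊[lamb'] E') = inl 1 := by
      rw [← hα]; simp
    exact inl_injective this
  -- the action of f on the E-part
  have hβ0 : ∀ e : E, ∃ e' : E', f (inr e) = inr e' := by
    intro e
    have : f (inr e) ∈ Set.range ⇑(inr : E' →* K ⋊[lamb'] E') := by
      rw [← hE]; exact ⟨inr e, ⟨e, rfl⟩, rfl⟩
    obtain ⟨e', h⟩ := this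
    exact ⟨e', h.symm⟩
  choose β hβ using hβ0
  have β1 : β 1 = 1 := by
    have : (inr (β 1) : K ⋊[lamb'] E') = inr 1 := by rw [← hβ]; simp
    exact inr_injective this
  have βinj : Function.Injective β := by
    intro e₁ e₂ h
    have : f (inr e₁) = f (inr e₂) := by rw [hβ, hβ, h]
    exact inr_injective (f.injective this)
  -- the action of f on H
  have hΦ0 : ∀ c : C, ∃ c' : C, f ⟨δ c, η c⟩ = ⟨δ c', η' c'⟩ := by
    intro c
    have : f ⟨δ c, η c⟩ ∈ {g : K ⋊[lamb'] E' | ∃ c : C, g = ⟨δ c, η' c⟩} := by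
      rw [← hH]; exact ⟨⟨δ c, η c⟩, ⟨c, rfl⟩, rfl⟩
    obtain ⟨c', h⟩ := this
    exact ⟨c', h⟩
  choose Φ hΦ using hΦ0
  -- components of f on H
  have hmk : ∀ c : C, f ⟨δ c, η c⟩ = ⟨α (δ c), β (η c)⟩ := by
    intro c
    have h1 : (⟨δ c, η c⟩ : K ⋊[lamb] E) = inl (δ c) * inr (η c) :=
      mk_eq_inl_mul_inr _ _
    rw [h1, map_mul, hα, hβ, ← mk_eq_inl_mul_inr]
  have hΦδ : ∀ c : C, δ (Φ c) = α (δ c) := by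
    intro c
    have := (hΦ c).symm.trans (hmk c)
    exact congrArg SemidirectProduct.left this
  have hΦη : ∀ c : C, η' (Φ c) = β (η c) := by
    intro c
    have := (hΦ c).symm.trans (hmk c)
    exact congrArg SemidirectProduct.right this
  refine ⟨Φ, ?_, ?_, ?_, ?_⟩
  · intro c₁ c₂ h
    apply hδi; apply αinj
    rw [← hΦδ, ← hΦδ, h]
  · apply hδi
    rw [hΦδ, hδ1, α1]
  · intro c
    rw [hΦη]
    constructor
    · intro h; rw [h, β1]
    · intro h; exact βinj (h.trans β1.symm)
  · -- the intertwining relation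
    have key : ∀ (c : C) (k : K), lam (Φ c) (α k) = α (lam c k) := by
      intro c k
      have h1 : (inl (lamb (η c) k) : K ⋊[lamb] E)
          = inr (η c) * inl k * inr (η c)⁻¹ := inl_aut _ _
      have h2 : f (inl (lamb (η c) k)) = inr (β (η c)) * inl (α k) * inr (β (η c))⁻¹ := by
        rw [h1]
        simp only [map_mul, map_inv, hα, hβ]
      rw [← inl_aut, hα] at h2
      have h3 : lamb' (β (η c)) (α k) = α (lamb (η c) k) := (inl_injective h2).symm
      rw [hl, ← hΦη, hl'] at h3
      exact h3
    intro c
    constructor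
    · intro h
      ext k'
      obtain ⟨k, rfl⟩ := αsurj k'
      rw [key, h]
      simp
    · intro h
      ext k
      apply αinj
      rw [← key, h]
      simp
/-- Auxiliary: construction of a trifactorised isomorphism from a compatible
isomorphism of the quotient factors. -/
lemma bwd_aux {K C E E' : Type*} [Group K] [Group C] [Group E] [Group E']
    (δ : C → K) (η : C →* E) (η' : C →* E')
    (lamb : E →* MulAut K) (lamb' : E' →* MulAut K)
    (β : E ≃* E') (hβ : ∀ c, β (η c) = η' c)
    (hlam : ∀ e, lamb' (β e) = lamb e) :
    ∃ f : (K ⋊[lamb] E) ≃* (K ⋊[lamb'] E'),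
      ⇑f '' Set.range ⇑(inl : K →* K ⋊[lamb] E)
        = Set.range ⇑(inl : K →* K ⋊[lamb'] E') ∧
      ⇑f '' {g : K ⋊[lamb] E | ∃ c : C, g = ⟨δ c, η c⟩}
        = {g : K ⋊[lamb'] E' | ∃ c : C, g = ⟨δ c, η' c⟩} ∧
      ⇑f '' Set.range ⇑(inr : E →* K ⋊[lamb] E)
        = Set.range ⇑(inr : E' →* K ⋊[lamb'] E') := by
  refine ⟨{ toFun := fun g => ⟨g.left, β g.right⟩
            invFun := fun g => ⟨g.left, β.symm g.right⟩
            left_inv := fun g => by simp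
            right_inv := fun g => by simp
            map_mul' := fun a b => by
              show (⟨(a * b).left, β (a * b).right⟩ : K ⋊[lamb'] E') = _
              rw [mul_left, mul_right]
              show _ = (⟨_ * lamb' (β a.right) _, β a.right * β b.right⟩ : K ⋊[lamb'] E')
              rw [hlam, map_mul] }, ?_, ?_, ?_⟩
  · ext x
    constructor
    · rintro ⟨_, ⟨k, rfl⟩, rfl⟩
      exact ⟨k, by simp⟩
    · rintro ⟨k, rfl⟩
      exact ⟨inl k, ⟨k, rfl⟩, by simp⟩
  · ext x
    constructor
    · rintro ⟨_, ⟨c, rfl⟩, rfl⟩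
      exact ⟨c, by simp [hβ]⟩
    · rintro ⟨c, rfl⟩
      exact ⟨⟨δ c, η c⟩, ⟨c, rfl⟩, by simp [hβ]⟩
  · ext x
    constructor
    · rintro ⟨_, ⟨e, rfl⟩, rfl⟩
      exact ⟨β e, by simp⟩
    · rintro ⟨e', rfl⟩
      exact ⟨inr (β.symm e'), ⟨β.symm e', rfl⟩, by simp⟩

/-- the trifactorised group associated via `η` is isomorphic to the
large trifactorised group (associated via `id : C → C`) iff `ker η = 1`, and it
is isomorphic to the small trifactorised group (associated via the corestriction
`λ : C → λ(C)`) iff `ker η = ker λ`. -/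
theorem stmt11 {K C E : Type*} [Group K] [Group C] [Group E]
    (lam : C →* MulAut K) (δ : C → K) (hδ : Function.Bijective δ)
    (hcoc : ∀ c c' : C, δ (c * c') = δ c * lam c (δ c'))
    (η : C →* E) (hη : Function.Surjective η) (hker : η.ker ≤ lam.ker)
    (lamb : E →* MulAut K) (hl : ∀ c : C, lamb (η c) = lam c) :
    (IsTrifacIso
        (Set.range ⇑(inl : K →* K ⋊[lamb] E))
        {g : K ⋊[lamb] E | ∃ c : C, g = ⟨δ c, η c⟩}
        (Set.range ⇑(inr : E →* K ⋊[lamb] E))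
        (Set.range ⇑(inl : K →* K ⋊[lam] C))
        {g : K ⋊[lam] C | ∃ c : C, g = ⟨δ c, c⟩}
        (Set.range ⇑(inr : C →* K ⋊[lam] C)) ↔ η.ker = ⊥) ∧
    (IsTrifacIso
        (Set.range ⇑(inl : K →* K ⋊[lamb] E))
        {g : K ⋊[lamb] E | ∃ c : C, g = ⟨δ c, η c⟩}
        (Set.range ⇑(inr : E →* K ⋊[lamb] E))
        (Set.range ⇑(inl : K →* K ⋊[lam.range.subtype] lam.range))
        {g : K ⋊[lam.range.subtype] lam.range | ∃ c : C, g = ⟨δ c, lam.rangeRestrict c⟩}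
        (Set.range ⇑(inr : lam.range →* K ⋊[lam.range.subtype] lam.range)) ↔
      η.ker = lam.ker) := by
  have hδ1 : δ 1 = 1 := by
    have h := hcoc 1 1
    simp only [mul_one, map_one, MulAut.one_apply] at h
    have : δ 1 * 1 = δ 1 * δ 1 := by rw [mul_one, ← h]
    exact (mul_left_cancel this).symm
  have hl2 : ∀ c : C, lam.range.subtype (lam.rangeRestrict c) = lam c := fun c => rfl
  constructor
  · constructor
    · rintro ⟨f, hK, hH, hE⟩
      obtain ⟨Φ, Φinj, Φ1, hηΦ, _⟩ :=
        fwd_aux lam δ hδ1 hδ.injective η (MonoidHom.id C) lamb lam hl (fun c => rfl)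
          f hK hH hE
      rw [Subgroup.eq_bot_iff_forall]
      intro c hc
      have h1 : η c = 1 := hc
      have h2 : Φ c = 1 := (hηΦ c).mp h1
      exact Φinj (h2.trans Φ1.symm)
    · intro hk
      have ηinj : Function.Injective η := by
        exact (MonoidHom.ker_eq_bot_iff η).mp hk
      set e : E ≃* C := (MulEquiv.ofBijective η ⟨ηinj, hη⟩).symm with he
      have heη : ∀ c : C, e (η c) = c := fun c =>
        (MulEquiv.ofBijective η ⟨ηinj, hη⟩).symm_apply_apply c
      obtain ⟨f, h1, h2, h3⟩ :=
        bwd_aux δ η (MonoidHom.id C) lamb lam e heη (by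
          intro x
          obtain ⟨c, rfl⟩ := hη x
          rw [heη, hl])
      exact ⟨f, h1, h2, h3⟩
  · constructor
    · rintro ⟨f, hK, hH, hE⟩
      obtain ⟨Φ, Φinj, Φ1, hηΦ, hlamΦ⟩ :=
        fwd_aux lam δ hδ1 hδ.injective η lam.rangeRestrict lamb lam.range.subtype
          hl hl2 f hK hH hE
      refine le_antisymm hker ?_
      intro c hc
      have h1 : lam c = 1 := hc
      have h2 : lam (Φ c) = 1 := (hlamΦ c).mp h1
      have h3 : lam.rangeRestrict (Φ c) = 1 := by
        have : Φ c ∈ lam.rangeRestrict.ker := by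
          rw [MonoidHom.ker_rangeRestrict]; exact h2
        exact this
      have h4 : η c = 1 := (hηΦ c).mpr h3
      exact h4
    · intro hk
      -- construct the isomorphism E ≃* lam.range
      have key : ∀ c c' : C, η c = η c' → lam.rangeRestrict c = lam.rangeRestrict c' := by
        intro c c' h
        have h1 : c'⁻¹ * c ∈ η.ker := by
          rw [MonoidHom.mem_ker, map_mul, map_inv, h]
          simp
        rw [hk, MonoidHom.mem_ker, map_mul, map_inv] at h1
        have h2 : lam c = lam c' := by
          have := congrArg (fun x => lam c' * x) h1
          simpa [mul_assoc] using this
        ext k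
        simp [MonoidHom.coe_rangeRestrict, h2]
      set σ : E → C := Function.surjInv hη with hσ
      have hσc : ∀ x : E, η (σ x) = x := Function.surjInv_eq hη
      have hβη : ∀ c : C, lam.rangeRestrict (σ (η c)) = lam.rangeRestrict c :=
        fun c => key _ _ (hσc (η c))
      set β0 : E →* lam.range :=
        { toFun := fun x => lam.rangeRestrict (σ x)
          map_one' := by
            have : lam.rangeRestrict (σ (η 1)) = lam.rangeRestrict 1 := hβη 1
            simpa using this
          map_mul' := by
            intro x y
            have hx := hσc x
            have hy := hσc y
            have : η (σ (x * y)) = η (σ x * σ y) := by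
              rw [map_mul, hx, hy, hσc]
            have := key _ _ this
            simpa [map_mul] using this } with hβ0
      have hβ0η : ∀ c : C, β0 (η c) = lam.rangeRestrict c := fun c => hβη c
      have βinj : Function.Injective β0 := by
        intro x y h
        obtain ⟨c, rfl⟩ := hη x
        obtain ⟨c', rfl⟩ := hη y
        rw [hβ0η, hβ0η] at h
        have h2 : lam c = lam c' := by
          have := Subtype.ext_iff.mp h
          simpa [MonoidHom.coe_rangeRestrict] using this
        have h3 : c'⁻¹ * c ∈ lam.ker := by
          rw [MonoidHom.mem_ker, map_mul, map_inv, h2]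
          simp
        rw [← hk, MonoidHom.mem_ker, map_mul, map_inv] at h3
        have : η c = η c' := by
          have := congrArg (fun x => η c' * x) h3
          simpa [mul_assoc] using this
        rw [this]
      have βsurj : Function.Surjective β0 := by
        intro y
        obtain ⟨c, hc⟩ := lam.rangeRestrict_surjective y
        exact ⟨η c, by rw [hβ0η, hc]⟩
      set β : E ≃* lam.range := MulEquiv.ofBijective β0 ⟨βinj, βsurj⟩ with hβdef
      have hβap : ∀ x : E, β x = β0 x := fun x => rfl
      obtain ⟨f, h1, h2, h3⟩ :=
        bwd_aux δ η lam.rangeRestrict lamb lam.range.subtype β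
          (fun c => by rw [hβap, hβ0η]) (by
            intro x
            obtain ⟨c, rfl⟩ := hη x
            rw [hβap, hβ0η, hl2, hl])
      exact ⟨f, h1, h2, h3⟩
end

section
/- Let (G,K,H,E) be a trifactorised group and let L be a subset of K. Then the following are equivalent: (1) L is a subgroup of K and LE ∩ H is a subgroup of G; (2) L is a subgroup of K and LE ∩ H is contained in the normaliser N_G(L); (3) LE ∩ LH is a subgroup of G. (Here LE = {l·e : l ∈ L, e ∈ E} and LH = {l·h : l ∈ L, h ∈ H} are set products; these conditions characterise the subsets of K corresponding to subbraces of the associated brace.) -/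
open scoped Pointwise

/-- A subset of a group is (the carrier of) a subgroup. -/
def IsSubgroupSet {G : Type*} [Group G] (S : Set G) : Prop :=
  1 ∈ S ∧ (∀ a ∈ S, ∀ b ∈ S, a * b ∈ S) ∧ ∀ a ∈ S, a⁻¹ ∈ S

/-- for a subset `L ⊆ K` the following are equivalent:
(1) `L` is a subgroup and `LE ∩ H` is a subgroup;
(2) `L` is a subgroup and `LE ∩ H ⊆ N_G(L)`;
(3) `LE ∩ LH` is a subgroup. -/
theorem stmt13 {G : Type*} [Group G] (K H E : Subgroup G)
    (hT : IsTrifactorised K H E)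
    (L : Set G) (hL : L ⊆ (K : Set G)) :
    ((IsSubgroupSet L ∧ IsSubgroupSet ((L * (E : Set G)) ∩ (H : Set G))) ↔
      (IsSubgroupSet L ∧
        ((L * (E : Set G)) ∩ (H : Set G)) ⊆
          {g : G | ∀ x : G, x ∈ L ↔ g * x * g⁻¹ ∈ L})) ∧
    ((IsSubgroupSet L ∧ IsSubgroupSet ((L * (E : Set G)) ∩ (H : Set G))) ↔
      IsSubgroupSet ((L * (E : Set G)) ∩ (L * (H : Set G)))) := by
  obtain ⟨hN, -, -, hHE, hKEtriv, -⟩ := hT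
  -- uniqueness of K-parts in KE-decompositions
  have uniq : ∀ {k1 e1 k2 e2 : G}, k1 ∈ K → e1 ∈ E → k2 ∈ K → e2 ∈ E →
      k1 * e1 = k2 * e2 → k1 = k2 := by
    intro k1 e1 k2 e2 hk1 he1 hk2 he2 h
    have h2 : k2⁻¹ * k1 = e2 * e1⁻¹ := by
      have h3 : k1 = k2 * e2 * e1⁻¹ := by rw [← h]; group
      rw [h3]; group
    have hmem : k2⁻¹ * k1 ∈ K ⊓ E := by
      refine ⟨K.mul_mem (K.inv_mem hk2) hk1, ?_⟩
      rw [h2]; exact E.mul_mem he2 (E.inv_mem he1)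
    rw [hKEtriv, Subgroup.mem_bot] at hmem
    exact (inv_mul_eq_one.mp hmem).symm
  -- under (1), every element of LE ∩ H conjugates L into L
  have conj : IsSubgroupSet L → IsSubgroupSet ((L * (E : Set G)) ∩ (H : Set G)) →
      ∀ a ∈ (L * (E : Set G)) ∩ (H : Set G), ∀ x ∈ L, a * x * a⁻¹ ∈ L := by
    intro hA hB a ha x hx
    obtain ⟨l1, hl1, e1, he1, hae⟩ := Set.mem_mul.mp ha.1
    obtain ⟨h, hh, η, hη, hxh⟩ := hHE x
    have hh' : h = x * η⁻¹ := by rw [hxh]; group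
    have hhM : h ∈ (L * (E : Set G)) ∩ (H : Set G) :=
      ⟨Set.mem_mul.mpr ⟨x, hx, η⁻¹, E.inv_mem hη, hh'.symm⟩, hh⟩
    obtain ⟨habLE, -⟩ := hB.2.1 a ha h hhM
    obtain ⟨l3, hl3, e3, he3, h3⟩ := Set.mem_mul.mp habLE
    have heq : (l1 * (e1 * x * e1⁻¹)) * (e1 * η⁻¹) = l3 * e3 := by
      rw [h3, ← hae, hh']; group
    have hK1 : l1 * (e1 * x * e1⁻¹) ∈ K :=
      K.mul_mem (hL hl1) (hN.conj_mem x (hL hx) e1)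
    have hkey := uniq hK1 (E.mul_mem he1 (E.inv_mem hη)) (hL hl3) he3 heq
    have hfin : a * x * a⁻¹ = l3 * l1⁻¹ := by
      have h4 : a * x * a⁻¹ = l1 * (e1 * x * e1⁻¹) * l1⁻¹ := by rw [← hae]; group
      rw [h4, hkey]
    rw [hfin]
    exact hA.2.1 _ hl3 _ (hA.2.2 _ hl1)
  -- (1) → (2)
  have h12 : IsSubgroupSet L → IsSubgroupSet ((L * (E : Set G)) ∩ (H : Set G)) →
      ((L * (E : Set G)) ∩ (H : Set G)) ⊆
        {g : G | ∀ x : G, x ∈ L ↔ g * x * g⁻¹ ∈ L} := by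
    intro hA hB a ha x
    constructor
    · exact fun hx => conj hA hB a ha x hx
    · intro hx
      have ha' : a⁻¹ ∈ (L * (E : Set G)) ∩ (H : Set G) := hB.2.2 a ha
      have h5 := conj hA hB a⁻¹ ha' _ hx
      have h6 : a⁻¹ * (a * x * a⁻¹) * a⁻¹⁻¹ = x := by group
      rwa [h6] at h5
  -- (2) → (1)
  have h21 : IsSubgroupSet L →
      ((L * (E : Set G)) ∩ (H : Set G)) ⊆
        {g : G | ∀ x : G, x ∈ L ↔ g * x * g⁻¹ ∈ L} →
      IsSubgroupSet ((L * (E : Set G)) ∩ (H : Set G)) := by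
    intro hA hC
    refine ⟨⟨Set.mem_mul.mpr ⟨1, hA.1, 1, E.one_mem, mul_one 1⟩, H.one_mem⟩, ?_, ?_⟩
    · intro a ha b hb
      obtain ⟨l1, hl1, e1, he1, hae⟩ := Set.mem_mul.mp ha.1
      obtain ⟨l2, hl2, e2, he2, hbe⟩ := Set.mem_mul.mp hb.1
      refine ⟨Set.mem_mul.mpr ⟨a * l2 * a⁻¹ * l1, hA.2.1 _ ((hC ha l2).mp hl2) _ hl1,
        e1 * e2, E.mul_mem he1 he2, ?_⟩, H.mul_mem ha.2 hb.2⟩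
      rw [← hae, ← hbe]; group
    · intro a ha
      obtain ⟨l, hl, e, he, hae⟩ := Set.mem_mul.mp ha.1
      have hmem : a⁻¹ * l⁻¹ * a ∈ L := by
        refine (hC ha _).mpr ?_
        have h7 : a * (a⁻¹ * l⁻¹ * a) * a⁻¹ = l⁻¹ := by group
        rw [h7]; exact hA.2.2 _ hl
      refine ⟨Set.mem_mul.mpr ⟨a⁻¹ * l⁻¹ * a, hmem, e⁻¹, E.inv_mem he, ?_⟩, H.inv_mem ha.2⟩
      rw [← hae]; group
  -- description of LE ∩ LH when L is a subgroup
  have memD : IsSubgroupSet L → ∀ g : G,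
      g ∈ (L * (E : Set G)) ∩ (L * (H : Set G)) ↔
        ∃ l ∈ L, ∃ h ∈ (L * (E : Set G)) ∩ (H : Set G), g = l * h := by
    intro hA g
    constructor
    · rintro ⟨hgE, hgH⟩
      obtain ⟨l1, hl1, e, he, h1⟩ := Set.mem_mul.mp hgE
      obtain ⟨l2, hl2, h, hh, h2⟩ := Set.mem_mul.mp hgH
      have h8 : l2 * (l2⁻¹ * l1 * e) = l2 * h := by rw [h2, ← h1]; group
      refine ⟨l2, hl2, h, ⟨Set.mem_mul.mpr ⟨l2⁻¹ * l1, hA.2.1 _ (hA.2.2 _ hl2) _ hl1,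
        e, he, mul_left_cancel h8⟩, hh⟩, h2.symm⟩
    · rintro ⟨l, hl, h, ⟨hhLE, hhH⟩, rfl⟩
      obtain ⟨l', hl', e, he, h'⟩ := Set.mem_mul.mp hhLE
      exact ⟨Set.mem_mul.mpr ⟨l * l', hA.2.1 _ hl _ hl', e, he, by rw [← h']; group⟩,
        Set.mem_mul.mpr ⟨l, hl, h, hhH, rfl⟩⟩
  -- (1) → (3)
  have h13 : IsSubgroupSet L → IsSubgroupSet ((L * (E : Set G)) ∩ (H : Set G)) →
      IsSubgroupSet ((L * (E : Set G)) ∩ (L * (H : Set G))) := by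
    intro hA hB
    have hC := h12 hA hB
    refine ⟨(memD hA 1).mpr ⟨1, hA.1, 1, hB.1, (mul_one 1).symm⟩, ?_, ?_⟩
    · intro a ha b hb
      obtain ⟨l1, hl1, m1, hm1, rfl⟩ := (memD hA a).mp ha
      obtain ⟨l2, hl2, m2, hm2, rfl⟩ := (memD hA b).mp hb
      exact (memD hA _).mpr ⟨l1 * (m1 * l2 * m1⁻¹), hA.2.1 _ hl1 _ ((hC hm1 l2).mp hl2),
        m1 * m2, hB.2.1 _ hm1 _ hm2, by group⟩
    · intro a ha
      obtain ⟨l, hl, m, hm, rfl⟩ := (memD hA a).mp ha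
      have hstep : m * (m⁻¹ * l⁻¹ * m) * m⁻¹ ∈ L := by
        have h9 : m * (m⁻¹ * l⁻¹ * m) * m⁻¹ = l⁻¹ := by group
        rw [h9]; exact hA.2.2 _ hl
      have hminv : m⁻¹ * l⁻¹ * m ∈ L := (hC hm _).mpr hstep
      exact (memD hA _).mpr ⟨m⁻¹ * l⁻¹ * m, hminv, m⁻¹, hB.2.2 _ hm, by group⟩
  -- (3) → (1)
  have h31 : IsSubgroupSet ((L * (E : Set G)) ∩ (L * (H : Set G))) →
      IsSubgroupSet L ∧ IsSubgroupSet ((L * (E : Set G)) ∩ (H : Set G)) := by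
    intro hD
    have fromLE : ∀ x ∈ (L * (E : Set G)), x ∈ (K : Set G) → x ∈ L := by
      intro x hx hxK
      obtain ⟨l, hl, e, he, h1⟩ := Set.mem_mul.mp hx
      have h10 : x = l := uniq hxK E.one_mem (hL hl) he (by rw [mul_one]; exact h1.symm)
      rw [h10]; exact hl
    have hinL : ∀ x ∈ L, x ∈ (L * (E : Set G)) ∩ (L * (H : Set G)) := by
      intro x hx
      exact ⟨Set.mem_mul.mpr ⟨x, hx, 1, E.one_mem, mul_one x⟩,
        Set.mem_mul.mpr ⟨x, hx, 1, H.one_mem, mul_one x⟩⟩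
    have hA : IsSubgroupSet L := by
      refine ⟨fromLE 1 hD.1.1 K.one_mem, ?_, ?_⟩
      · intro a ha b hb
        exact fromLE _ (hD.2.1 _ (hinL a ha) _ (hinL b hb)).1 (K.mul_mem (hL ha) (hL hb))
      · intro a ha
        exact fromLE _ (hD.2.2 _ (hinL a ha)).1 (K.inv_mem (hL ha))
    refine ⟨hA, ?_⟩
    have hMD : ∀ h ∈ (L * (E : Set G)) ∩ (H : Set G),
        h ∈ (L * (E : Set G)) ∩ (L * (H : Set G)) := by
      intro h hh
      exact ⟨hh.1, Set.mem_mul.mpr ⟨1, hA.1, h, hh.2, one_mul h⟩⟩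
    refine ⟨⟨hD.1.1, H.one_mem⟩, ?_, ?_⟩
    · intro a ha b hb
      exact ⟨(hD.2.1 _ (hMD a ha) _ (hMD b hb)).1, H.mul_mem ha.2 hb.2⟩
    · intro a ha
      exact ⟨(hD.2.2 _ (hMD a ha)).1, H.inv_mem ha.2⟩
  constructor
  · constructor
    · rintro ⟨hA, hB⟩; exact ⟨hA, h12 hA hB⟩
    · rintro ⟨hA, hC⟩; exact ⟨hA, h21 hA hC⟩
  · constructor
    · rintro ⟨hA, hB⟩; exact h13 hA hB
    · exact h31
end

section
/- Let (G,K,H,E) be a trifactorised group and let L be a subset of K. Then the following are equivalent: (1) L is a normal subgroup of G and LE ∩ H is a normal subgroup of H; (2) LE ∩ LH is a normal subgroup of G. (Here LE and LH denote set products; these conditions characterise the subsets of K corresponding to ideals of the associated brace.) -/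
open scoped Pointwise

/-- for a subset `L ⊆ K` the following are equivalent:
(1) `L` is a normal subgroup of `G` and `LE ∩ H` is a normal subgroup of `H`;
(2) `LE ∩ LH` is a normal subgroup of `G`. -/
theorem stmt14 {G : Type*} [Group G] (K H E : Subgroup G)
    (hT : IsTrifactorised K H E)
    (L : Set G) (hL : L ⊆ (K : Set G)) :
    ((IsSubgroupSet L ∧ (∀ g : G, ∀ x ∈ L, g * x * g⁻¹ ∈ L)) ∧
      (IsSubgroupSet ((L * (E : Set G)) ∩ (H : Set G)) ∧
        (∀ h ∈ H, ∀ x ∈ (L * (E : Set G)) ∩ (H : Set G),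
          h * x * h⁻¹ ∈ (L * (E : Set G)) ∩ (H : Set G))) ↔
    (IsSubgroupSet ((L * (E : Set G)) ∩ (L * (H : Set G))) ∧
      (∀ g : G, ∀ x ∈ (L * (E : Set G)) ∩ (L * (H : Set G)),
        g * x * g⁻¹ ∈ (L * (E : Set G)) ∩ (L * (H : Set G))))) := by
  obtain ⟨hKn, fKH, fKE, fHE, tKE, tHE⟩ := hT
  have memKE : ∀ x : G, x ∈ K → x ∈ E → x = 1 := by
    intro x hk he
    have hx : x ∈ K ⊓ E := ⟨hk, he⟩
    rw [tKE, Subgroup.mem_bot] at hx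
    exact hx
  set S : Set G := (L * (E : Set G)) ∩ (H : Set G) with hSdef
  set T : Set G := (L * (E : Set G)) ∩ (L * (H : Set G)) with hTdef
  constructor
  · rintro ⟨⟨⟨hL1, hLm, hLi⟩, hLn⟩, ⟨⟨hS1, hSm, hSi⟩, hSn⟩⟩
    -- L * S ⊆ T
    have hST : ∀ l ∈ L, ∀ s ∈ S, l * s ∈ T := by
      intro l hl s hs
      obtain ⟨hsLE, hsH⟩ := hs
      obtain ⟨l₁, hl₁, e₁, he₁, heq⟩ := Set.mem_mul.mp hsLE
      constructor
      · exact Set.mem_mul.mpr ⟨l * l₁, hLm l hl l₁ hl₁, e₁, he₁, by rw [mul_assoc, heq]⟩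
      · exact Set.mem_mul.mpr ⟨l, hl, s, hsH, rfl⟩
    -- T ⊆ L * S
    have hTS : ∀ x ∈ T, ∃ l ∈ L, ∃ s ∈ S, l * s = x := by
      rintro x ⟨hx1, hx2⟩
      obtain ⟨l, hl, e, he, heq⟩ := Set.mem_mul.mp hx1
      obtain ⟨l', hl', h, hh, heq'⟩ := Set.mem_mul.mp hx2
      refine ⟨l', hl', h, ⟨Set.mem_mul.mpr ⟨l'⁻¹ * l, hLm _ (hLi l' hl') _ hl, e, he, ?_⟩, hh⟩, heq'⟩
      have : h = l'⁻¹ * x := by rw [← heq']; group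
      rw [this, ← heq]; group
    -- key: conjugation of S by elements of E lands in T
    have keyE : ∀ e ∈ E, ∀ s ∈ S, e * s * e⁻¹ ∈ T := by
      intro e he s hs
      obtain ⟨hsLE, hsH⟩ := hs
      obtain ⟨l₀, hl₀, e₀, he₀, h0⟩ := Set.mem_mul.mp hsLE
      obtain ⟨k, hk, h₁, hh₁, hgeq⟩ := fKH e
      have hs' : h₁ * s * h₁⁻¹ ∈ S := hSn h₁ hh₁ s ⟨hsLE, hsH⟩
      set s' : G := h₁ * s * h₁⁻¹ with hs'def
      obtain ⟨l₁, hl₁, e₁, he₁, h1⟩ := Set.mem_mul.mp hs'.1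
      set c : G := k * s' * k⁻¹ * s'⁻¹ with hcdef
      have hcK : c ∈ K := by
        have h2 : s' * k⁻¹ * s'⁻¹ ∈ K := hKn.conj_mem _ (K.inv_mem hk) _
        have : c = k * (s' * k⁻¹ * s'⁻¹) := by rw [hcdef]; group
        rw [this]; exact K.mul_mem hk h2
      have hl₂ : e * l₀ * e⁻¹ ∈ L := hLn e l₀ hl₀
      have he₂ : e * e₀ * e⁻¹ ∈ E := E.mul_mem (E.mul_mem he he₀) (E.inv_mem he)
      have heqA : e * s * e⁻¹ = (e * l₀ * e⁻¹) * (e * e₀ * e⁻¹) := by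
        rw [← h0]; group
      have heqB : e * s * e⁻¹ = c * s' := by
        rw [hcdef, hs'def, hgeq]; group
      -- combine: c * l₁ * e₁ = l₂ * e₂
      have heqC : c * (l₁ * e₁) = (e * l₀ * e⁻¹) * (e * e₀ * e⁻¹) := by
        rw [h1, ← heqB, heqA]
      have hq : ((e * l₀ * e⁻¹)⁻¹ * c * l₁) = (e * e₀ * e⁻¹) * e₁⁻¹ := by
        calc (e * l₀ * e⁻¹)⁻¹ * c * l₁
            = (e * l₀ * e⁻¹)⁻¹ * (c * (l₁ * e₁)) * e₁⁻¹ := by group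
          _ = (e * l₀ * e⁻¹)⁻¹ * ((e * l₀ * e⁻¹) * (e * e₀ * e⁻¹)) * e₁⁻¹ := by rw [heqC]
          _ = (e * e₀ * e⁻¹) * e₁⁻¹ := by group
      have hqK : ((e * l₀ * e⁻¹)⁻¹ * c * l₁) ∈ K :=
        K.mul_mem (K.mul_mem (K.inv_mem (hL hl₂)) hcK) (hL hl₁)
      have hqE : ((e * l₀ * e⁻¹)⁻¹ * c * l₁) ∈ E := by
        rw [hq]; exact E.mul_mem he₂ (E.inv_mem he₁)
      have hq1 : ((e * l₀ * e⁻¹)⁻¹ * c * l₁) = 1 := memKE _ hqK hqE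
      have hcL : c ∈ L := by
        have : c = (e * l₀ * e⁻¹) * l₁⁻¹ := by
          have h3 : (e * l₀ * e⁻¹) * (((e * l₀ * e⁻¹)⁻¹ * c * l₁) * l₁⁻¹) = c := by group
          rw [hq1] at h3
          rw [← h3]; group
        rw [this]; exact hLm _ hl₂ _ (hLi _ hl₁)
      rw [heqB]; exact hST c hcL s' hs'
    -- conjugation of S by any element of G lands in T
    have keyG : ∀ g : G, ∀ s ∈ S, g * s * g⁻¹ ∈ T := by
      intro g s hs
      obtain ⟨h, hh, e, he, hgeq⟩ := fHE g
      have h1 : e * s * e⁻¹ ∈ T := keyE e he s hs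
      obtain ⟨l, hl, s₂, hs₂, h2⟩ := hTS _ h1
      have heq : g * s * g⁻¹ = (h * l * h⁻¹) * (h * s₂ * h⁻¹) := by
        rw [hgeq]
        have : e * s * e⁻¹ = l * s₂ := h2.symm
        have h4 : s = e⁻¹ * (l * s₂) * e := by rw [← this]; group
        rw [h4]; group
      rw [heq]
      exact hST _ (hLn h l hl) _ (hSn h hh s₂ hs₂)
    constructor
    · refine ⟨⟨Set.mem_mul.mpr ⟨1, hL1, 1, E.one_mem, one_mul 1⟩,
        Set.mem_mul.mpr ⟨1, hL1, 1, H.one_mem, one_mul 1⟩⟩, ?_, ?_⟩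
      · intro a ha b hb
        obtain ⟨l₁, hl₁, s₁, hs₁, h1⟩ := hTS a ha
        obtain ⟨l₂, hl₂, s₂, hs₂, h2⟩ := hTS b hb
        have heq : a * b = (l₁ * (s₁ * l₂ * s₁⁻¹)) * (s₁ * s₂) := by
          rw [← h1, ← h2]; group
        rw [heq]
        exact hST _ (hLm _ hl₁ _ (hLn s₁ l₂ hl₂)) _ (hSm s₁ hs₁ s₂ hs₂)
      · intro a ha
        obtain ⟨l₁, hl₁, s₁, hs₁, h1⟩ := hTS a ha
        have heq : a⁻¹ = (s₁⁻¹ * l₁⁻¹ * (s₁⁻¹)⁻¹) * s₁⁻¹ := by rw [← h1]; group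
        rw [heq]
        exact hST _ (hLn s₁⁻¹ l₁⁻¹ (hLi _ hl₁)) _ (hSi s₁ hs₁)
    · intro g x hx
      obtain ⟨l, hl, s, hs, h1⟩ := hTS x hx
      have h2 : g * s * g⁻¹ ∈ T := keyG g s hs
      obtain ⟨l₃, hl₃, s₃, hs₃, h3⟩ := hTS _ h2
      have heq : g * x * g⁻¹ = (g * l * g⁻¹ * l₃) * s₃ := by
        rw [← h1]
        have h4 : g * (l * s) * g⁻¹ = (g * l * g⁻¹) * (g * s * g⁻¹) := by group
        rw [h4, ← h3]; group
      rw [heq]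
      exact hST _ (hLm _ (hLn g l hl) _ hl₃) _ hs₃
  · rintro ⟨⟨hT1, hTm, hTi⟩, hTn⟩
    -- T ∩ K = L
    have hLT : L ⊆ T := by
      intro l hl
      exact ⟨Set.mem_mul.mpr ⟨l, hl, 1, E.one_mem, mul_one l⟩,
        Set.mem_mul.mpr ⟨l, hl, 1, H.one_mem, mul_one l⟩⟩
    have hTK : ∀ x ∈ T, x ∈ K → x ∈ L := by
      rintro x ⟨hx1, _⟩ hxK
      obtain ⟨l, hl, e, he, heq⟩ := Set.mem_mul.mp hx1
      have heE : e = 1 := by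
        have heK : e ∈ K := by
          have : e = l⁻¹ * x := by rw [← heq]; group
          rw [this]; exact K.mul_mem (K.inv_mem (hL hl)) hxK
        exact memKE e heK he
      rw [← heq, heE, mul_one]; exact hl
    have hL1 : (1 : G) ∈ L := hTK 1 hT1 K.one_mem
    have hLsub : IsSubgroupSet L := by
      refine ⟨hL1, ?_, ?_⟩
      · intro a ha b hb
        exact hTK _ (hTm a (hLT ha) b (hLT hb)) (K.mul_mem (hL ha) (hL hb))
      · intro a ha
        exact hTK _ (hTi a (hLT ha)) (K.inv_mem (hL ha))
    have hLn : ∀ g : G, ∀ x ∈ L, g * x * g⁻¹ ∈ L := by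
      intro g x hx
      exact hTK _ (hTn g x (hLT hx)) (hKn.conj_mem x (hL hx) g)
    -- S = T ∩ H
    have hSTH : ∀ x : G, x ∈ S ↔ (x ∈ T ∧ x ∈ H) := by
      intro x
      constructor
      · rintro ⟨hx1, hx2⟩
        exact ⟨⟨hx1, Set.mem_mul.mpr ⟨1, hL1, x, hx2, one_mul x⟩⟩, hx2⟩
      · rintro ⟨⟨hx1, _⟩, hx2⟩
        exact ⟨hx1, hx2⟩
    refine ⟨⟨hLsub, hLn⟩, ⟨?_, ?_⟩⟩
    · refine ⟨(hSTH 1).mpr ⟨hT1, H.one_mem⟩, ?_, ?_⟩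
      · intro a ha b hb
        obtain ⟨ha1, ha2⟩ := (hSTH a).mp ha
        obtain ⟨hb1, hb2⟩ := (hSTH b).mp hb
        exact (hSTH _).mpr ⟨hTm a ha1 b hb1, H.mul_mem ha2 hb2⟩
      · intro a ha
        obtain ⟨ha1, ha2⟩ := (hSTH a).mp ha
        exact (hSTH _).mpr ⟨hTi a ha1, H.inv_mem ha2⟩
    · intro h hh x hx
      obtain ⟨hx1, hx2⟩ := (hSTH x).mp hx
      exact (hSTH _).mpr ⟨hTn h x hx1,
        H.mul_mem (H.mul_mem hh hx2) (H.inv_mem hh)⟩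
end

section
/- Let (G,K,H,E) be a trifactorised group with associated bijective derivation σ: H → K, and let π_E: G → E denote the map sending g to its E-component e_g in the unique factorisation g = k_g·e_g with k_g ∈ K, e_g ∈ E. Then for every subset L of K, π_E(σ⁻¹(L)) = L⁻¹H ∩ E, where L⁻¹H = {l⁻¹·h : l ∈ L, h ∈ H}. -/
open scoped Pointwise

/-- with `σ : H → K` the bijective derivation and `π_E : G → E` the
`E`-component map, for every subset `L ⊆ K` we have
`π_E(σ⁻¹(L)) = L⁻¹H ∩ E`. -/
theorem stmt15 {G : Type*} [Group G] (K H E : Subgroup G)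
    (hT : IsTrifactorised K H E)
    (kc ec : G → G)
    (hkc : ∀ g : G, kc g ∈ K) (hec : ∀ g : G, ec g ∈ E)
    (hfac : ∀ g : G, g = kc g * ec g) :
    ∀ L : Set G, L ⊆ (K : Set G) →
      ec '' {g : G | g ∈ H ∧ kc g ∈ L} = (L⁻¹ * (H : Set G)) ∩ (E : Set G) := by
  intro L hL
  have uniq : ∀ k e : G, k ∈ K → e ∈ E → kc (k * e) = k ∧ ec (k * e) = e := by
    intro k e hk he
    have h1 : kc (k * e) * ec (k * e) = k * e := (hfac _).symm
    have hmem : k⁻¹ * kc (k * e) ∈ K ⊓ E := by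
      constructor
      · exact K.mul_mem (K.inv_mem hk) (hkc _)
      · have heq2 : k⁻¹ * kc (k * e) = e * (ec (k * e))⁻¹ := by
          calc k⁻¹ * kc (k * e) = k⁻¹ * (kc (k * e) * ec (k * e)) * (ec (k * e))⁻¹ := by group
            _ = k⁻¹ * (k * e) * (ec (k * e))⁻¹ := by rw [h1]
            _ = e * (ec (k * e))⁻¹ := by group
        rw [heq2]
        exact E.mul_mem he (E.inv_mem (hec _))
    rw [hT.trivKE, Subgroup.mem_bot] at hmem
    have hk' : kc (k * e) = k := (inv_mul_eq_one.mp hmem).symm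
    refine ⟨hk', ?_⟩
    have := h1
    rw [hk'] at this
    exact mul_left_cancel this
  ext x
  constructor
  · rintro ⟨g, ⟨hgH, hgL⟩, rfl⟩
    refine ⟨⟨(kc g)⁻¹, Set.inv_mem_inv.2 hgL, g, hgH, ?_⟩, hec g⟩
    rw [eq_comm, eq_inv_mul_iff_mul_eq]
    exact (hfac g).symm
  · rintro ⟨⟨li, hli, h, hh, rfl⟩, hxE⟩
    have hl : li⁻¹ ∈ L := by simpa using hli
    have hK : li⁻¹ ∈ K := hL hl
    have heq : h = li⁻¹ * (li * h) := by group
    have hu := uniq li⁻¹ (li * h) hK hxE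
    refine ⟨h, ⟨hh, ?_⟩, ?_⟩
    · rw [heq]; rw [hu.1]; exact hl
    · rw [heq]; simpa using hu.2
end

section
/- Let (G,K,H,E) be a trifactorised group with associated bijective derivation σ: H → K. Let L be a subgroup of K such that σ⁻¹(L) = LE ∩ H is a subgroup of G (i.e., L corresponds to a subbrace), and set T = L·σ⁻¹(L). Then T = LE ∩ LH is a subgroup of G, and (T, L, T ∩ H, T ∩ E) = (LE ∩ LH, L, LE ∩ H, LH ∩ E) is a trifactorised group: L is a normal subgroup of T, T = L·(T ∩ H) = L·(T ∩ E) = (T ∩ H)·(T ∩ E), and L ∩ (T ∩ E) = (T ∩ H) ∩ (T ∩ E) = 1. -/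
open scoped Pointwise

/-- if `L ≤ K` corresponds to a subbrace (i.e. `σ⁻¹(L) = LE ∩ H` is
a subgroup) and `T = L·σ⁻¹(L)`, then `T = LE ∩ LH` and
`(T, L, T ∩ H, T ∩ E) = (LE ∩ LH, L, LE ∩ H, LH ∩ E)` is a trifactorised group. -/
theorem stmt16 {G : Type*} [Group G] (K H E : Subgroup G)
    (hT : IsTrifactorised K H E)
    (kc ec : G → G)
    (hkc : ∀ g : G, kc g ∈ K) (hec : ∀ g : G, ec g ∈ E)
    (hfac : ∀ g : G, g = kc g * ec g)
    (L : Subgroup G) (hLK : L ≤ K)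
    (hsub : IsSubgroupSet (((L : Set G) * (E : Set G)) ∩ (H : Set G)))
    (T : Set G)
    (hTdef : T = (L : Set G) * {g : G | g ∈ H ∧ kc g ∈ L}) :
    T = ((L : Set G) * (E : Set G)) ∩ ((L : Set G) * (H : Set G)) ∧
    IsSubgroupSet T ∧
    T ∩ (H : Set G) = ((L : Set G) * (E : Set G)) ∩ (H : Set G) ∧
    T ∩ (E : Set G) = ((L : Set G) * (H : Set G)) ∩ (E : Set G) ∧
    -- L is a normal subgroup of T:
    (∀ t ∈ T, ∀ l ∈ L, t * l * t⁻¹ ∈ L) ∧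
    -- the triple factorisation of T:
    T = (L : Set G) * (T ∩ (H : Set G)) ∧
    T = (L : Set G) * (T ∩ (E : Set G)) ∧
    T = (T ∩ (H : Set G)) * (T ∩ (E : Set G)) ∧
    -- trivial intersections:
    (L : Set G) ∩ (T ∩ (E : Set G)) = {1} ∧
    (T ∩ (H : Set G)) ∩ (T ∩ (E : Set G)) = {1} := by

  obtain ⟨hnorm, factKH, factKE, factHE, trivKE, trivHE⟩ := hT
  subst hTdef
  set S : Set G := {g : G | g ∈ H ∧ kc g ∈ L} with hSdef
  -- uniqueness of the KE-factorisation
  have huniq : ∀ k ∈ K, ∀ e ∈ E, kc (k * e) = k ∧ ec (k * e) = e := by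
    intro k hk e he
    have h1 : k * e = kc (k * e) * ec (k * e) := hfac _
    have h2 : (kc (k * e))⁻¹ * k = ec (k * e) * e⁻¹ := by
      calc (kc (k * e))⁻¹ * k = (kc (k * e))⁻¹ * (k * e) * e⁻¹ := by group
        _ = (kc (k * e))⁻¹ * (kc (k * e) * ec (k * e)) * e⁻¹ := by rw [← h1]
        _ = ec (k * e) * e⁻¹ := by group
    have hmemK : (kc (k * e))⁻¹ * k ∈ K := mul_mem (inv_mem (hkc _)) hk
    have hmemE : (kc (k * e))⁻¹ * k ∈ E := by rw [h2]; exact mul_mem (hec _) (inv_mem he)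
    have hone : (kc (k * e))⁻¹ * k = 1 := by
      have := trivKE ▸ (Subgroup.mem_inf.mpr ⟨hmemK, hmemE⟩)
      simpa [Subgroup.mem_bot] using this
    have hkeq : kc (k * e) = k := by
      have := inv_mul_eq_one.mp hone; exact this
    refine ⟨hkeq, ?_⟩
    have h3 : k * e = k * ec (k * e) := by
      conv_lhs => rw [h1]
      rw [hkeq]
    exact (mul_left_cancel h3).symm
  have hS_eq : ((L : Set G) * (E : Set G)) ∩ (H : Set G) = S := by
    ext g
    simp only [Set.mem_inter_iff, Set.mem_mul, hSdef, Set.mem_setOf_eq, SetLike.mem_coe]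
    constructor
    · rintro ⟨⟨l, hl, e, he, rfl⟩, hH⟩
      exact ⟨hH, by rw [(huniq l (hLK hl) e he).1]; exact hl⟩
    · rintro ⟨hH, hkL⟩
      exact ⟨⟨kc g, hkL, ec g, hec g, (hfac g).symm⟩, hH⟩
  rw [hS_eq] at hsub
  obtain ⟨hS1, hSmul, hSinv⟩ := hsub
  -- surjectivity of σ : S → L
  have hsurj : ∀ l ∈ L, ∃ h, h ∈ S ∧ kc h = l := by
    intro l hl
    obtain ⟨h, hh, e, he, heq⟩ := factHE l
    have hh' : h = l * e⁻¹ := by rw [heq]; group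
    have hu := (huniq l (hLK hl) e⁻¹ (inv_mem he)).1
    have hkch : kc h = l := by rw [hh']; exact hu
    exact ⟨h, ⟨hh, by rw [hkch]; exact hl⟩, hkch⟩
  -- conjugation of σ-values by E-components
  have hconjE : ∀ h1 ∈ S, ∀ h2 ∈ S, ec h1 * kc h2 * (ec h1)⁻¹ ∈ L := by
    intro h1 hh1 h2 hh2
    have hprod : h1 * h2 = (kc h1 * (ec h1 * kc h2 * (ec h1)⁻¹)) * (ec h1 * ec h2) := by
      conv_lhs => rw [hfac h1, hfac h2]
      group
    have hKmem : kc h1 * (ec h1 * kc h2 * (ec h1)⁻¹) ∈ K :=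
      mul_mem (hkc _) (hnorm.conj_mem _ (hkc _) _)
    have hEmem : ec h1 * ec h2 ∈ E := mul_mem (hec _) (hec _)
    have h12S : h1 * h2 ∈ S := hSmul _ hh1 _ hh2
    have hkc12 : kc (h1 * h2) = kc h1 * (ec h1 * kc h2 * (ec h1)⁻¹) := by
      rw [hprod]; exact (huniq _ hKmem _ hEmem).1
    have heq2 : ec h1 * kc h2 * (ec h1)⁻¹ = (kc h1)⁻¹ * kc (h1 * h2) := by
      rw [hkc12]; group
    rw [heq2]
    exact mul_mem (inv_mem hh1.2) h12S.2
  -- S normalizes L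
  have hconjS : ∀ h ∈ S, ∀ l ∈ L, h * l * h⁻¹ ∈ L := by
    intro h hh l hl
    obtain ⟨h2, hh2, hkch2⟩ := hsurj l hl
    have heq2 : h * l * h⁻¹ = kc h * (ec h * kc h2 * (ec h)⁻¹) * (kc h)⁻¹ := by
      rw [← hkch2]
      conv_lhs => rw [hfac h]
      group
    rw [heq2]
    exact mul_mem (mul_mem hh.2 (hconjE h hh h2 hh2)) (inv_mem hh.2)
  -- T is a subgroup
  have hgrp : IsSubgroupSet ((L : Set G) * S) := by
    refine ⟨⟨1, one_mem L, 1, hS1, mul_one 1⟩, ?_, ?_⟩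
    · rintro a ⟨l1, hl1, s1, hs1, rfl⟩ b ⟨l2, hl2, s2, hs2, rfl⟩
      refine ⟨l1 * (s1 * l2 * s1⁻¹), mul_mem hl1 (hconjS s1 hs1 l2 hl2),
        s1 * s2, hSmul s1 hs1 s2 hs2, by group⟩
    · rintro a ⟨l, hl, s, hs, rfl⟩
      refine ⟨s⁻¹ * l⁻¹ * (s⁻¹)⁻¹, hconjS s⁻¹ (hSinv s hs) l⁻¹ (inv_mem hl),
        s⁻¹, hSinv s hs, by group⟩
  -- T = LE ∩ LH
  have hT_eq : (L : Set G) * S = ((L : Set G) * (E : Set G)) ∩ ((L : Set G) * (H : Set G)) := by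
    ext g
    simp only [Set.mem_mul, Set.mem_inter_iff, SetLike.mem_coe, hSdef, Set.mem_setOf_eq]
    constructor
    · rintro ⟨l, hl, s, ⟨hsH, hskL⟩, rfl⟩
      refine ⟨⟨l * kc s, mul_mem hl hskL, ec s, hec s, ?_⟩, ⟨l, hl, s, hsH, rfl⟩⟩
      rw [mul_assoc, ← hfac s]
    · rintro ⟨⟨l, hl, e, he, heq⟩, ⟨l', hl', h, hhH, rfl⟩⟩
      have hh : h = (l'⁻¹ * l) * e := by rw [mul_assoc, heq]; group
      have hkch : kc h = l'⁻¹ * l := by rw [hh]; exact (huniq _ (hLK (mul_mem (inv_mem hl') hl)) e he).1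
      exact ⟨l', hl', h, ⟨hhH, by rw [hkch]; exact mul_mem (inv_mem hl') hl⟩, rfl⟩
  -- T ∩ H = S
  have hTH : ((L : Set G) * S) ∩ (H : Set G) = S := by
    ext g
    constructor
    · rintro ⟨⟨l, hl, s, hs, rfl⟩, hgH⟩
      have hkcg : kc (l * s) = l * kc s := by
        conv_lhs => rw [hfac s, ← mul_assoc]
        exact (huniq _ (mul_mem (hLK hl) (hkc s)) _ (hec s)).1
      exact ⟨hgH, by rw [hkcg]; exact mul_mem hl hs.2⟩
    · intro hg
      exact ⟨⟨1, one_mem L, g, hg, one_mul g⟩, hg.1⟩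
  -- T ∩ E = LH ∩ E
  have hTE : ((L : Set G) * S) ∩ (E : Set G) =
      ((L : Set G) * (H : Set G)) ∩ (E : Set G) := by
    ext g
    constructor
    · rintro ⟨⟨l, hl, s, hs, rfl⟩, hgE⟩
      exact ⟨⟨l, hl, s, hs.1, rfl⟩, hgE⟩
    · rintro ⟨⟨l, hl, h, hhH, rfl⟩, hgE⟩
      have hh : h = l⁻¹ * (l * h) := by group
      have hkch : kc h = l⁻¹ := by rw [hh]; exact (huniq _ (hLK (inv_mem hl)) _ hgE).1
      exact ⟨⟨l, hl, h, ⟨hhH, by rw [hkch]; exact inv_mem hl⟩, rfl⟩, hgE⟩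
  refine ⟨hT_eq, hgrp, hTH.trans hS_eq.symm, hTE, ?_, ?_, ?_, ?_, ?_, ?_⟩
  · -- normality of L in T
    rintro t ⟨l', hl', s, hs, rfl⟩ l hl
    have heq2 : l' * s * l * (l' * s)⁻¹ = l' * (s * l * s⁻¹) * l'⁻¹ := by group
    rw [heq2]
    exact mul_mem (mul_mem hl' (hconjS s hs l hl)) (inv_mem hl')
  · -- T = L (T ∩ H)
    rw [hTH]
  · -- T = L (T ∩ E)
    ext g
    constructor
    · rintro ⟨l, hl, s, hs, rfl⟩
      refine ⟨l * kc s, mul_mem hl hs.2, ec s, ⟨⟨(kc s)⁻¹, inv_mem hs.2, s, hs, ?_⟩, hec s⟩, ?_⟩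
      · show (kc s)⁻¹ * s = ec s
        rw [inv_mul_eq_iff_eq_mul]; exact hfac s
      · show l * kc s * ec s = l * s
        rw [mul_assoc, ← hfac s]
    · rintro ⟨l, hl, t, ⟨⟨l2, hl2, s, hs, rfl⟩, _⟩, rfl⟩
      exact ⟨l * l2, mul_mem hl hl2, s, hs, by group⟩
  · -- T = (T ∩ H)(T ∩ E)
    rw [hTH]
    ext g
    constructor
    · rintro ⟨l, hl, s, hs, rfl⟩
      obtain ⟨h, hhH, e, he, heq⟩ := factHE (l * s)
      have hlsLE : ∃ l2 ∈ L, ∃ e2 ∈ E, l * s = l2 * e2 :=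
        ⟨l * kc s, mul_mem hl hs.2, ec s, hec s, by conv_lhs => rw [hfac s, ← mul_assoc]⟩
      obtain ⟨l2, hl2, e2, he2, heq2⟩ := hlsLE
      have hhLE : h = l2 * (e2 * e⁻¹) := by
        rw [← mul_assoc, ← heq2, heq]; group
      have hhS : h ∈ S := by
        refine ⟨hhH, ?_⟩
        have hkch : kc h = l2 := by
          rw [hhLE]; exact (huniq _ (hLK hl2) _ (mul_mem he2 (inv_mem he))).1
        rw [hkch]; exact hl2
      have hhT : h ∈ (L : Set G) * S := ⟨1, one_mem L, h, hhS, one_mul h⟩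
      have heT : e ∈ (L : Set G) * S := by
        have : e = h⁻¹ * (l * s) := by rw [heq]; group
        rw [this]
        exact hgrp.2.1 _ (hgrp.2.2 _ hhT) _ ⟨l, hl, s, hs, rfl⟩
      exact ⟨h, hhS, e, ⟨heT, he⟩, heq.symm⟩
    · rintro ⟨s, hs, t, ⟨htT, _⟩, rfl⟩
      exact hgrp.2.1 _ ⟨1, one_mem L, s, hs, one_mul s⟩ _ htT
  · -- L ∩ (T ∩ E) = 1
    ext g
    simp only [Set.mem_inter_iff, Set.mem_singleton_iff, SetLike.mem_coe]
    constructor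
    · rintro ⟨hgL, _, hgE⟩
      have := trivKE ▸ (Subgroup.mem_inf.mpr ⟨hLK hgL, hgE⟩)
      simpa [Subgroup.mem_bot] using this
    · rintro rfl
      exact ⟨one_mem L, hgrp.1, one_mem E⟩
  · -- (T ∩ H) ∩ (T ∩ E) = 1
    ext g
    simp only [Set.mem_inter_iff, Set.mem_singleton_iff, SetLike.mem_coe]
    constructor
    · rintro ⟨⟨_, hgH⟩, _, hgE⟩
      have := trivHE ▸ (Subgroup.mem_inf.mpr ⟨hgH, hgE⟩)
      simpa [Subgroup.mem_bot] using this
    · rintro rfl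
      exact ⟨⟨hgrp.1, one_mem H⟩, hgrp.1, one_mem E⟩
end

section
/- Let (G,K,H,E) be a trifactorised group and let T be a subgroup of G. Then T is a trifactorised subgroup of G (i.e., (T, T∩K, T∩H, T∩E) is itself a trifactorised group, with T∩K normal in T, T = (T∩K)(T∩H) = (T∩K)(T∩E) = (T∩H)(T∩E), and (T∩K)∩(T∩E) = (T∩H)∩(T∩E) = 1) if and only if T = (T∩K)E ∩ (T∩K)H, where the right-hand side is an intersection of set products. -/
open scoped Pointwise

/-- a subgroup `T ≤ G` is a trifactorised subgroup, i.e.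
`(T, T∩K, T∩H, T∩E)` is a trifactorised group, iff `T = (T∩K)E ∩ (T∩K)H`. -/
theorem stmt17 {G : Type*} [Group G] (K H E : Subgroup G)
    (hT : IsTrifactorised K H E)
    (T : Subgroup G) :
    ((∀ t ∈ T, ∀ x ∈ T ⊓ K, t * x * t⁻¹ ∈ T ⊓ K) ∧
      (T : Set G) = ((T ⊓ K : Subgroup G) : Set G) * ((T ⊓ H : Subgroup G) : Set G) ∧
      (T : Set G) = ((T ⊓ K : Subgroup G) : Set G) * ((T ⊓ E : Subgroup G) : Set G) ∧
      (T : Set G) = ((T ⊓ H : Subgroup G) : Set G) * ((T ⊓ E : Subgroup G) : Set G) ∧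
      (T ⊓ K) ⊓ (T ⊓ E) = ⊥ ∧
      (T ⊓ H) ⊓ (T ⊓ E) = ⊥) ↔
    (T : Set G) =
      (((T ⊓ K : Subgroup G) : Set G) * (E : Set G)) ∩
        (((T ⊓ K : Subgroup G) : Set G) * (H : Set G)) := by
  obtain ⟨hN, fKH, fKE, fHE, tKE, tHE⟩ := hT
  have memHE : ∀ g : G, g ∈ H → g ∈ E → g = 1 := by
    intro g hH hE
    have : g ∈ H ⊓ E := ⟨hH, hE⟩
    simpa [tHE] using this
  have memKE : ∀ g : G, g ∈ K → g ∈ E → g = 1 := by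
    intro g hK hE
    have : g ∈ K ⊓ E := ⟨hK, hE⟩
    simpa [tKE] using this
  constructor
  · rintro ⟨-, h2, h3, h4, -, -⟩
    apply Set.Subset.antisymm
    · intro g hg
      constructor
      · have hg3 : g ∈ ((T ⊓ K : Subgroup G) : Set G) * ((T ⊓ E : Subgroup G) : Set G) := by
          rw [← h3]; exact hg
        obtain ⟨k, hk, e, he, rfl⟩ := hg3
        exact ⟨k, hk, e, (Subgroup.mem_inf.mp he).2, rfl⟩
      · have hg2 : g ∈ ((T ⊓ K : Subgroup G) : Set G) * ((T ⊓ H : Subgroup G) : Set G) := by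
          rw [← h2]; exact hg
        obtain ⟨k, hk, h, hh, rfl⟩ := hg2
        exact ⟨k, hk, h, (Subgroup.mem_inf.mp hh).2, rfl⟩
    · rintro g ⟨⟨k1, hk1, e, he, hge⟩, ⟨k2, hk2, h, hh, hgh⟩⟩
      simp only [SetLike.mem_coe, Subgroup.mem_inf] at hk1 hk2 he hh
      have hkT : k2⁻¹ * k1 ∈ T ⊓ K :=
        mul_mem (inv_mem (Subgroup.mem_inf.mpr hk2)) (Subgroup.mem_inf.mpr hk1)
      have hkmem : (k2⁻¹ * k1) ∈ ((T ⊓ H : Subgroup G) : Set G) * ((T ⊓ E : Subgroup G) : Set G) := by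
        rw [← h4]; exact hkT.1
      obtain ⟨h0, hh0, e0, he0, hk0⟩ := hkmem
      simp only [SetLike.mem_coe, Subgroup.mem_inf] at hh0 he0
      -- k2⁻¹ * k1 * e = h, and h0 * e0 = k2⁻¹ * k1
      have hge' : k1 * e = g := hge
      have hgh' : k2 * h = g := hgh
      have hk0' : h0 * e0 = k2⁻¹ * k1 := hk0
      have key : h0⁻¹ * h = e0 * e := by
        have h1 : k2⁻¹ * k1 * e = h := by
          rw [mul_assoc, hge', ← hgh']; group
        rw [← hk0'] at h1
        rw [← h1]
        group
      have htriv : h0⁻¹ * h = 1 :=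
        memHE _ (mul_mem (inv_mem hh0.2) hh) (key ▸ mul_mem he0.2 he)
      have hh0h : h = h0 := by
        have := htriv
        rw [inv_mul_eq_one] at this
        exact this.symm
      rw [← hgh', hh0h]
      exact SetLike.mem_coe.mpr (T.mul_mem hk2.1 hh0.1)
  · intro hEq
    have memT : ∀ g : G, g ∈ T ↔
        (g ∈ ((T ⊓ K : Subgroup G) : Set G) * (E : Set G) ∧
         g ∈ ((T ⊓ K : Subgroup G) : Set G) * (H : Set G)) := by
      intro g
      constructor
      · intro hg
        have : g ∈ (((T ⊓ K : Subgroup G) : Set G) * (E : Set G)) ∩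
            (((T ⊓ K : Subgroup G) : Set G) * (H : Set G)) := by rw [← hEq]; exact hg
        exact this
      · intro hg
        have : g ∈ (T : Set G) := by rw [hEq]; exact hg
        exact this
    refine ⟨?_, ?_, ?_, ?_, ?_, ?_⟩
    · intro t ht x hx
      obtain ⟨hxT, hxK⟩ := Subgroup.mem_inf.mp hx
      exact Subgroup.mem_inf.mpr ⟨T.mul_mem (T.mul_mem ht hxT) (T.inv_mem ht), hN.conj_mem x hxK t⟩
    · apply Set.Subset.antisymm
      · intro g hg
        obtain ⟨-, k, hk, h, hh, hkh⟩ := (memT g).mp hg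
        simp only [SetLike.mem_coe, Subgroup.mem_inf] at hk
        have hkh' : k * h = g := hkh
        have hhT : h ∈ T := by
          have : h = k⁻¹ * g := by rw [← hkh']; group
          rw [this]; exact T.mul_mem (T.inv_mem hk.1) hg
        exact ⟨k, Subgroup.mem_inf.mpr hk, h, Subgroup.mem_inf.mpr ⟨hhT, hh⟩, hkh⟩
      · rintro g ⟨k, hk, h, hh, rfl⟩
        simp only [SetLike.mem_coe, Subgroup.mem_inf] at hk hh
        exact mul_mem hk.1 hh.1
    · apply Set.Subset.antisymm
      · intro g hg
        obtain ⟨⟨k, hk, e, he, hke⟩, -⟩ := (memT g).mp hg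
        simp only [SetLike.mem_coe, Subgroup.mem_inf] at hk
        have hke' : k * e = g := hke
        have heT : e ∈ T := by
          have : e = k⁻¹ * g := by rw [← hke']; group
          rw [this]; exact T.mul_mem (T.inv_mem hk.1) hg
        exact ⟨k, Subgroup.mem_inf.mpr hk, e, Subgroup.mem_inf.mpr ⟨heT, he⟩, hke⟩
      · rintro g ⟨k, hk, e, he, rfl⟩
        simp only [SetLike.mem_coe, Subgroup.mem_inf] at hk he
        exact mul_mem hk.1 he.1
    · apply Set.Subset.antisymm
      · intro g hg
        obtain ⟨⟨k1, hk1, e1, he1, hke1⟩, -⟩ := (memT g).mp hg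
        simp only [SetLike.mem_coe, Subgroup.mem_inf] at hk1
        obtain ⟨h, hh, e, he, hghe⟩ := fHE g
        -- h = g * e⁻¹ = k1 * (e1 * e⁻¹)
        have hhT : h ∈ T := by
          apply (memT h).mpr
          constructor
          · refine ⟨k1, Subgroup.mem_inf.mpr hk1, e1 * e⁻¹, E.mul_mem he1 (E.inv_mem he), ?_⟩
            have hke1' : k1 * e1 = g := hke1
            show k1 * (e1 * e⁻¹) = h
            rw [← mul_assoc, hke1', hghe]
            group
          · exact ⟨1, SetLike.mem_coe.mpr (one_mem _), h, hh, one_mul h⟩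
        have heT : e ∈ T := by
          have : e = h⁻¹ * g := by rw [hghe]; group
          rw [this]; exact T.mul_mem (T.inv_mem hhT) hg
        exact ⟨h, Subgroup.mem_inf.mpr ⟨hhT, hh⟩, e, Subgroup.mem_inf.mpr ⟨heT, he⟩, hghe.symm⟩
      · rintro g ⟨h, hh, e, he, rfl⟩
        simp only [SetLike.mem_coe, Subgroup.mem_inf] at hh he
        exact mul_mem hh.1 he.1
    · rw [eq_bot_iff]
      intro x hx
      simp only [Subgroup.mem_inf] at hx
      simpa using memKE x hx.1.2 hx.2.2
    · rw [eq_bot_iff]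
      intro x hx
      simp only [Subgroup.mem_inf] at hx
      simpa using memHE x hx.1.2 hx.2.2
end

section
/- Let (G,K,H,E) be a trifactorised group and T a normal subgroup of G. Then the following are equivalent: (1) KT ∩ ET = T and HT ∩ ET = T (equivalently, the quotient tuple (G/T, KT/T, HT/T, ET/T) is a trifactorised group); (2) T = (T∩K)(T∩E) = (T∩H)(T∩E); (3) T = ((T∩K)H ∩ (T∩K)E)·(T∩E), where the products are set products in G. -/
open scoped Pointwise

/-- for a normal subgroup `T` of a trifactorised group `G`, the
following are equivalent:
(1) `KT ∩ ET = T` and `HT ∩ ET = T` (i.e. the quotient tuple is trifactorised);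
(2) `T = (T∩K)(T∩E) = (T∩H)(T∩E)`;
(3) `T = ((T∩K)H ∩ (T∩K)E)·(T∩E)`. -/
theorem stmt18 {G : Type*} [Group G] (K H E : Subgroup G)
    (hT : IsTrifactorised K H E)
    (T : Subgroup G) (hTn : T.Normal) :
    ((((K : Set G) * (T : Set G)) ∩ ((E : Set G) * (T : Set G)) = (T : Set G) ∧
        ((H : Set G) * (T : Set G)) ∩ ((E : Set G) * (T : Set G)) = (T : Set G)) ↔
      ((T : Set G) = ((T ⊓ K : Subgroup G) : Set G) * ((T ⊓ E : Subgroup G) : Set G) ∧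
        (T : Set G) = ((T ⊓ H : Subgroup G) : Set G) * ((T ⊓ E : Subgroup G) : Set G))) ∧
    (((T : Set G) = ((T ⊓ K : Subgroup G) : Set G) * ((T ⊓ E : Subgroup G) : Set G) ∧
        (T : Set G) = ((T ⊓ H : Subgroup G) : Set G) * ((T ⊓ E : Subgroup G) : Set G)) ↔
      (T : Set G) =
        ((((T ⊓ K : Subgroup G) : Set G) * (H : Set G)) ∩
            (((T ⊓ K : Subgroup G) : Set G) * (E : Set G))) *
          ((T ⊓ E : Subgroup G) : Set G)) := by
  obtain ⟨hKn, fKH, fKE, fHE, tKE, tHE⟩ := hT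
  have memTK : ∀ x : G, x ∈ T → x ∈ K → x ∈ ((T ⊓ K : Subgroup G) : Set G) :=
    fun x h1 h2 => Subgroup.mem_inf.mpr ⟨h1, h2⟩
  have memTE : ∀ x : G, x ∈ T → x ∈ E → x ∈ ((T ⊓ E : Subgroup G) : Set G) :=
    fun x h1 h2 => Subgroup.mem_inf.mpr ⟨h1, h2⟩
  have memTH : ∀ x : G, x ∈ T → x ∈ H → x ∈ ((T ⊓ H : Subgroup G) : Set G) :=
    fun x h1 h2 => Subgroup.mem_inf.mpr ⟨h1, h2⟩
  -- (2) → (1), per conjunct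
  have back1 : ∀ (A : Subgroup G), A ⊓ E = ⊥ →
      (T : Set G) = ((T ⊓ A : Subgroup G) : Set G) * ((T ⊓ E : Subgroup G) : Set G) →
      ((A : Set G) * (T : Set G)) ∩ ((E : Set G) * (T : Set G)) = (T : Set G) := by
    intro A tAE e1
    ext x
    constructor
    · rintro ⟨hxA, hxE⟩
      rw [Set.mem_mul] at hxA hxE
      obtain ⟨k, hk, t1, ht1, hx1⟩ := hxA
      obtain ⟨e, he, t2, ht2, hx2⟩ := hxE
      have htT : (t1 * t2⁻¹ : G) ∈ (T : Set G) := T.mul_mem ht1 (T.inv_mem ht2)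
      rw [e1] at htT
      rw [Set.mem_mul] at htT
      obtain ⟨a, ha, b, hb, hab⟩ := htT
      have haA : a ∈ A := (Subgroup.mem_inf.mp ha).2
      have haT : a ∈ T := (Subgroup.mem_inf.mp ha).1
      have hbE : b ∈ E := (Subgroup.mem_inf.mp hb).2
      have hbT : b ∈ T := (Subgroup.mem_inf.mp hb).1
      -- k * t1 = e * t2, so k * (a*b) = k * t1 * t2⁻¹ = e, hence k*a = e*b⁻¹
      have key : k * t1 * t2⁻¹ = e := by
        rw [hx1, ← hx2]; group
      have key2 : k * a = e * b⁻¹ := by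
        have : k * (a * b) = e := by rw [hab]; rw [← mul_assoc]; exact key
        calc k * a = k * (a * b) * b⁻¹ := by group
        _ = e * b⁻¹ := by rw [this]
      have hmem : k * a ∈ A ⊓ E := by
        refine Subgroup.mem_inf.mpr ⟨A.mul_mem hk haA, ?_⟩
        rw [key2]; exact E.mul_mem he (E.inv_mem hbE)
      rw [tAE, Subgroup.mem_bot] at hmem
      have heb : e = b := by
        have : e * b⁻¹ = 1 := by rw [← key2, hmem]
        have := mul_eq_one_iff_eq_inv.mp this
        rw [this]; group
      have heT : e ∈ T := by rw [heb]; exact hbT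
      have : x ∈ T := by rw [← hx2]; exact T.mul_mem heT ht2
      exact this
    · intro hx
      constructor
      · exact Set.mem_mul.mpr ⟨1, A.one_mem, x, hx, one_mul x⟩
      · exact Set.mem_mul.mpr ⟨1, E.one_mem, x, hx, one_mul x⟩
  -- (1) → (2), per conjunct
  have fwd1 : ∀ (A : Subgroup G), (∀ g : G, ∃ k ∈ A, ∃ e ∈ E, g = k * e) →
      ((A : Set G) * (T : Set G)) ∩ ((E : Set G) * (T : Set G)) = (T : Set G) →
      (T : Set G) = ((T ⊓ A : Subgroup G) : Set G) * ((T ⊓ E : Subgroup G) : Set G) := by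
    intro A fAE h1
    apply subset_antisymm
    · intro t ht
      obtain ⟨k, hk, e, he, rfl⟩ := fAE t
      have heT : e ∈ (T : Set G) := by
        rw [← h1]
        constructor
        · exact Set.mem_mul.mpr ⟨k⁻¹, A.inv_mem hk, k * e, ht, by group⟩
        · exact Set.mem_mul.mpr ⟨e, he, 1, T.one_mem, mul_one e⟩
      have hkT : k ∈ T := by
        have := T.mul_mem ht (T.inv_mem heT)
        simpa using this
      exact Set.mem_mul.mpr ⟨k, Subgroup.mem_inf.mpr ⟨hkT, hk⟩, e,
        Subgroup.mem_inf.mpr ⟨heT, he⟩, rfl⟩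
    · rintro x hx
      rw [Set.mem_mul] at hx
      obtain ⟨a, ha, b, hb, rfl⟩ := hx
      exact T.mul_mem (Subgroup.mem_inf.mp ha).1 (Subgroup.mem_inf.mp hb).1
  refine ⟨⟨fun h => ⟨fwd1 K fKE h.1, fwd1 H fHE h.2⟩,
      fun h => ⟨back1 K tKE h.1, back1 H tHE h.2⟩⟩, ?_, ?_⟩
  · -- (2) → (3)
    rintro ⟨e1, e2⟩
    apply subset_antisymm
    · intro t ht
      have ht' := ht
      rw [e1, Set.mem_mul] at ht'
      obtain ⟨a, ha, b, hb, rfl⟩ := ht'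
      refine Set.mem_mul.mpr ⟨a, ⟨?_, ?_⟩, b, hb, rfl⟩
      · exact Set.mem_mul.mpr ⟨a, ha, 1, H.one_mem, mul_one a⟩
      · exact Set.mem_mul.mpr ⟨a, ha, 1, E.one_mem, mul_one a⟩
    · rintro x hx
      rw [Set.mem_mul] at hx
      obtain ⟨y, ⟨hy1, hy2⟩, s, hs, rfl⟩ := hx
      rw [Set.mem_mul] at hy1 hy2
      obtain ⟨a, ha, h, hh, hy1'⟩ := hy1
      obtain ⟨b, hb, e, he, hy2'⟩ := hy2
      have haT : a ∈ T := (Subgroup.mem_inf.mp ha).1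
      have hbT : b ∈ T := (Subgroup.mem_inf.mp hb).1
      -- h = (a⁻¹ * b) * e, with a⁻¹*b ∈ T
      have hc : (a⁻¹ * b : G) ∈ (T : Set G) := T.mul_mem (T.inv_mem haT) hbT
      rw [e2, Set.mem_mul] at hc
      obtain ⟨w, hw, v, hv, hwv⟩ := hc
      have hwH : w ∈ H := (Subgroup.mem_inf.mp hw).2
      have hwT : w ∈ T := (Subgroup.mem_inf.mp hw).1
      have hvE : v ∈ E := (Subgroup.mem_inf.mp hv).2
      have hchain : h = w * (v * e) := by
        have h1 : h = a⁻¹ * (b * e) := by rw [hy2', ← hy1']; group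
        rw [h1, ← mul_assoc, ← hwv]; group
      have hmem : w⁻¹ * h ∈ H ⊓ E := by
        refine Subgroup.mem_inf.mpr ⟨H.mul_mem (H.inv_mem hwH) hh, ?_⟩
        have : w⁻¹ * h = v * e := by rw [hchain]; group
        rw [this]; exact E.mul_mem hvE he
      rw [tHE, Subgroup.mem_bot] at hmem
      have hhw : h = w := (inv_mul_eq_one.mp hmem).symm
      have hhT : h ∈ T := hhw ▸ hwT
      have hyT : (a * h : G) ∈ T := T.mul_mem haT hhT
      rw [hy1'] at hyT
      exact T.mul_mem hyT (Subgroup.mem_inf.mp hs).1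
  · -- (3) → (2)
    intro e3
    have hXsub : ∀ x : G,
        x ∈ ((((T ⊓ K : Subgroup G) : Set G) * (H : Set G)) ∩
          (((T ⊓ K : Subgroup G) : Set G) * (E : Set G))) → x ∈ T := by
      intro x hx
      have : x ∈ (T : Set G) := by
        rw [e3]
        exact Set.mem_mul.mpr ⟨x, hx, 1, (T ⊓ E).one_mem, mul_one x⟩
      exact this
    -- first conjunct : T = (T⊓K)(T⊓E)
    have c1 : (T : Set G) = ((T ⊓ K : Subgroup G) : Set G) * ((T ⊓ E : Subgroup G) : Set G) := by
      apply subset_antisymm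
      · intro t ht
        rw [e3] at ht
        rw [Set.mem_mul] at ht
        obtain ⟨y, hy, s, hs, rfl⟩ := ht
        have hyT : y ∈ T := hXsub y hy
        obtain ⟨hy1, hy2⟩ := hy
        rw [Set.mem_mul] at hy2
        obtain ⟨b, hb, e, he, hy2'⟩ := hy2
        have hbT : b ∈ T := (Subgroup.mem_inf.mp hb).1
        have heT : e ∈ T := by
          have : e = b⁻¹ * y := by rw [← hy2']; group
          rw [this]; exact T.mul_mem (T.inv_mem hbT) hyT
        refine Set.mem_mul.mpr ⟨b, hb, e * s, ?_, by rw [← mul_assoc, hy2']⟩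
        exact Subgroup.mem_inf.mpr ⟨T.mul_mem heT (Subgroup.mem_inf.mp hs).1,
          E.mul_mem he (Subgroup.mem_inf.mp hs).2⟩
      · rintro x hx
        rw [Set.mem_mul] at hx
        obtain ⟨a, ha, b, hb, rfl⟩ := hx
        exact T.mul_mem (Subgroup.mem_inf.mp ha).1 (Subgroup.mem_inf.mp hb).1
    refine ⟨c1, ?_⟩
    -- key : T⊓K ⊆ (T⊓H)(T⊓E)
    have key : ∀ a : G, a ∈ T → a ∈ K →
        a ∈ ((T ⊓ H : Subgroup G) : Set G) * ((T ⊓ E : Subgroup G) : Set G) := by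
      intro a haT haK
      obtain ⟨h, hh, e, he, rfl⟩ := fHE a
      have hhX : h ∈ T := by
        apply hXsub
        constructor
        · exact Set.mem_mul.mpr ⟨1, (T ⊓ K).one_mem, h, hh, one_mul h⟩
        · refine Set.mem_mul.mpr ⟨h * e, Subgroup.mem_inf.mpr ⟨haT, haK⟩, e⁻¹,
            E.inv_mem he, by group⟩
      have heT : e ∈ T := by
        have : e = h⁻¹ * (h * e) := by group
        rw [this]; exact T.mul_mem (T.inv_mem hhX) haT
      exact Set.mem_mul.mpr ⟨h, Subgroup.mem_inf.mpr ⟨hhX, hh⟩, e,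
        Subgroup.mem_inf.mpr ⟨heT, he⟩, rfl⟩
    apply subset_antisymm
    · intro t ht
      have ht' := ht
      rw [c1, Set.mem_mul] at ht'
      obtain ⟨b, hb, s, hs, rfl⟩ := ht'
      have := key b (Subgroup.mem_inf.mp hb).1 (Subgroup.mem_inf.mp hb).2
      rw [Set.mem_mul] at this
      obtain ⟨w, hw, v, hv, hwv⟩ := this
      refine Set.mem_mul.mpr ⟨w, hw, v * s, ?_, by rw [← mul_assoc, hwv]⟩
      exact Subgroup.mem_inf.mpr ⟨T.mul_mem (Subgroup.mem_inf.mp hv).1 (Subgroup.mem_inf.mp hs).1,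
        E.mul_mem (Subgroup.mem_inf.mp hv).2 (Subgroup.mem_inf.mp hs).2⟩
    · rintro x hx
      rw [Set.mem_mul] at hx
      obtain ⟨a, ha, b, hb, rfl⟩ := hx
      exact T.mul_mem (Subgroup.mem_inf.mp ha).1 (Subgroup.mem_inf.mp hb).1
end

section
/- Let (K,C,λ,δ) be brace data and let (G,K,H,E) be the trifactorised group associated with the brace via a surjective group homomorphism η: C → E with ker η ≤ ker λ. Let Λ = λ(C) ≤ Aut(K), let S = K·Λ ≤ Hol(K) = K ⋊ Aut(K), and let H_S = {δ(c)·λ(c) : c ∈ C} ≤ Hol(K), so that (S, K, H_S, Λ) is the small trifactorised group of the brace. Then the map f: G → Hol(K) given by f(k·η(c)) = k·λ(c) (for k ∈ K, c ∈ C) is a well-defined group homomorphism with image S, restricting to the identity on K and satisfying f(H) = H_S and f(E) = Λ; hence the small trifactorised group is a quotient of every trifactorised group associated with the brace. Dually, taking η₀ = id_C, every trifactorised group associated with the brace is a quotient of the large trifactorised group (K ⋊_λ C, K, {δ(c)·c : c ∈ C}, C) via the surjective morphism k·c ↦ k·η(c). -/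
open SemidirectProduct

/-- every trifactorised group associated with brace data
`(K, C, λ, δ)` via `η : C → E` maps onto the small trifactorised group
`(K·λ(C), K, {δ(c)·λ(c)}, λ(C))` inside `Hol(K) = K ⋊ Aut(K)` via
`k·η(c) ↦ k·λ(c)`; dually, the large trifactorised group
`(K ⋊_λ C, K, {δ(c)·c}, C)` maps onto it via `k·c ↦ k·η(c)`. -/
theorem stmt19 {K C E : Type*} [Group K] [Group C] [Group E]
    (lam : C →* MulAut K) (δ : C → K) (hδ : Function.Bijective δ)
    (hcoc : ∀ c c' : C, δ (c * c') = δ c * lam c (δ c'))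
    (η : C →* E) (hη : Function.Surjective η) (hker : η.ker ≤ lam.ker)
    (lamb : E →* MulAut K) (hl : ∀ c : C, lamb (η c) = lam c) :
    -- the small trifactorised group is a quotient of (G, K, H, E):
    (∃ f : (K ⋊[lamb] E) →* (K ⋊[MonoidHom.id (MulAut K)] MulAut K),
        (∀ (k : K) (c : C), f ⟨k, η c⟩ = ⟨k, lam c⟩) ∧
        Set.range ⇑f =
          {g : K ⋊[MonoidHom.id (MulAut K)] MulAut K | ∃ (k : K) (c : C), g = ⟨k, lam c⟩} ∧
        (∀ k : K, f (inl k) = inl k) ∧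
        ⇑f '' {g : K ⋊[lamb] E | ∃ c : C, g = ⟨δ c, η c⟩} =
          {g : K ⋊[MonoidHom.id (MulAut K)] MulAut K | ∃ c : C, g = ⟨δ c, lam c⟩} ∧
        ⇑f '' Set.range ⇑(inr : E →* K ⋊[lamb] E) =
          {g : K ⋊[MonoidHom.id (MulAut K)] MulAut K | ∃ c : C, g = inr (lam c)}) ∧
    -- (G, K, H, E) is a quotient of the large trifactorised group:
    (∃ q : (K ⋊[lam] C) →* (K ⋊[lamb] E),
        (∀ (k : K) (c : C), q ⟨k, c⟩ = ⟨k, η c⟩) ∧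
        Function.Surjective q ∧
        ⇑q '' Set.range ⇑(inl : K →* K ⋊[lam] C) =
          Set.range ⇑(inl : K →* K ⋊[lamb] E) ∧
        ⇑q '' {g : K ⋊[lam] C | ∃ c : C, g = ⟨δ c, c⟩} =
          {g : K ⋊[lamb] E | ∃ c : C, g = ⟨δ c, η c⟩} ∧
        ⇑q '' Set.range ⇑(inr : C →* K ⋊[lam] C) =
          Set.range ⇑(inr : E →* K ⋊[lamb] E)) := by
  constructor
  · refine ⟨SemidirectProduct.map (MonoidHom.id K) lamb (fun e => by ext k; rfl), ?_, ?_, ?_, ?_, ?_⟩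
    · intro k c
      ext <;> simp [SemidirectProduct.map, hl]
    · ext g
      constructor
      · rintro ⟨x, rfl⟩
        obtain ⟨c, hc⟩ := hη x.right
        exact ⟨x.left, c, by ext <;> simp [SemidirectProduct.map, hl, ← hc]⟩
      · rintro ⟨k, c, rfl⟩
        exact ⟨⟨k, η c⟩, by ext <;> simp [SemidirectProduct.map, hl]⟩
    · intro k
      simp
    · ext g
      constructor
      · rintro ⟨x, ⟨c, rfl⟩, rfl⟩
        exact ⟨c, by ext <;> simp [SemidirectProduct.map, hl]⟩
      · rintro ⟨c, rfl⟩
        exact ⟨⟨δ c, η c⟩, ⟨c, rfl⟩, by ext <;> simp [SemidirectProduct.map, hl]⟩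
    · ext g
      constructor
      · rintro ⟨x, ⟨e, rfl⟩, rfl⟩
        obtain ⟨c, rfl⟩ := hη e
        exact ⟨c, by ext <;> simp [SemidirectProduct.map, hl]⟩
      · rintro ⟨c, rfl⟩
        exact ⟨inr (η c), ⟨η c, rfl⟩, by ext <;> simp [SemidirectProduct.map, hl]⟩
  · refine ⟨SemidirectProduct.map (MonoidHom.id K) η (fun c => by ext k; simp [hl c]), ?_, ?_, ?_, ?_, ?_⟩
    · intro k c
      ext <;> simp [SemidirectProduct.map]
    · intro g
      obtain ⟨c, hc⟩ := hη g.right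
      exact ⟨⟨g.left, c⟩, by ext <;> simp [SemidirectProduct.map, hc]⟩
    · ext g
      constructor
      · rintro ⟨x, ⟨k, rfl⟩, rfl⟩
        exact ⟨k, by simp⟩
      · rintro ⟨k, rfl⟩
        exact ⟨inl k, ⟨k, rfl⟩, by simp⟩
    · ext g
      constructor
      · rintro ⟨x, ⟨c, rfl⟩, rfl⟩
        exact ⟨c, by ext <;> simp [SemidirectProduct.map]⟩
      · rintro ⟨c, rfl⟩
        exact ⟨⟨δ c, c⟩, ⟨c, rfl⟩, by ext <;> simp [SemidirectProduct.map]⟩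
    · ext g
      constructor
      · rintro ⟨x, ⟨c, rfl⟩, rfl⟩
        exact ⟨η c, by simp⟩
      · rintro ⟨e, rfl⟩
        obtain ⟨c, rfl⟩ := hη e
        exact ⟨inr c, ⟨c, rfl⟩, by simp⟩
end
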